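/- arXiv:2107.01881 — 6 statements merged into one kernel-verified Lean document; each statement's English description precedes it below -/
import Mathlib

section
/- Fix integers T ≥ 1 and k ≥ 0, predictions w_1,…,w_T ∈ W and gradients g_1,…,g_T ∈ E*, and let P be the set of passed rounds of the Top-k Filter with parameter k. Let S ⊆ [T] satisfy T − |S| ≤ k, let u ∈ W, and define D(u,S) = max{‖w_t − u‖ : t ∈ [T], ‖g_t‖_* ≤ 2G(S)} (equal to 0 if no such t exists). If B ∈ ℝ is such that Σ_{t∈P} g_t(w_t − u) ≤ B, then the linearized robust regret satisfies Σ_{t∈S} g_t(w_t − u) ≤ B + 4·D(u,S)·G(S)·(k+1). -/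
/-!
Top-k Filter (Algorithm 1): rounds are indexed `0, 1, …, T-1`.  For round `t`,
`topkThresh g k t` is the `(k+1)`-th largest value among `‖g 0‖, …, ‖g t‖`
(`0` if fewer than `k+1` values are available), i.e. the minimum of the list
maintained by the algorithm.  Round `t` is passed iff `‖g t‖ ≤ 2 * topkThresh g k t`.
Gradients live in the continuous dual `E →L[ℝ] ℝ`, whose operator norm is the dual norm.
-/

/-- The `(k+1)`-th largest element of a list of reals ( `0` if the list has fewer
than `k+1` elements). -/
noncomputable def kthLargest (k : ℕ) (l : List ℝ) : ℝ :=
  (l.mergeSort (fun a b => decide (b ≤ a))).getD k 0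

/-- `m_t`: the `(k+1)`-th largest value among `‖g 0‖, …, ‖g t‖`. -/
noncomputable def topkThresh {E : Type*} [NormedAddCommGroup E] [NormedSpace ℝ E]
    (g : ℕ → E →L[ℝ] ℝ) (k t : ℕ) : ℝ :=
  kthLargest k ((List.range (t + 1)).map fun s => ‖g s‖)

/-- The set of rounds in `{0, …, T-1}` passed on to ALG by the Top-k Filter. -/
noncomputable def topkPassed {E : Type*} [NormedAddCommGroup E] [NormedSpace ℝ E]
    (g : ℕ → E →L[ℝ] ℝ) (k T : ℕ) : Finset ℕ :=
  (Finset.range T).filter fun t => ‖g t‖ ≤ 2 * topkThresh g k t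

/-- `G(S) = max_{t ∈ S} ‖g t‖` (with `G(∅) = 0`). -/
noncomputable def gradMax {E : Type*} [NormedAddCommGroup E] [NormedSpace ℝ E]
    (g : ℕ → E →L[ℝ] ℝ) (S : Finset ℕ) : ℝ :=
  ((S.sup fun t => ‖g t‖₊ : NNReal) : ℝ)

/-- `D(u,S) = max{‖w t - u‖ : t ∈ [T], ‖g t‖ ≤ 2 G(S)}` (with value `0` if no such `t`). -/
noncomputable def distMax {E : Type*} [NormedAddCommGroup E] [NormedSpace ℝ E]
    (g : ℕ → E →L[ℝ] ℝ) (w : ℕ → E) (u : E) (T : ℕ) (S : Finset ℕ) : ℝ :=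
  ((((Finset.range T).filter fun t => ‖g t‖ ≤ 2 * gradMax g S).sup
      fun t => ‖w t - u‖₊ : NNReal) : ℝ)

/-!
Split `∑_S` as `∑_P + ∑_{S \ P} - ∑_{P \ S}`; every remaining term is at most `‖g_t‖ D(u,S)`.
A gradient larger than `G(S)` belongs to one of the at most `k` outliers, so the threshold `m_t`
never exceeds `G(S)`: passed rounds have `‖g_t‖ ≤ 2 G(S)`, and at most `k` of them lie outside `S`.
A filtered round `t` has at most `k` rounds `i ≤ t` with `‖g_i‖ > ‖g_t‖ / 2`, so each dyadic scale
`(G / 2 ^ (j + 1), G / 2 ^ j]` holds at most `k` filtered rounds of `S` and their norms sum to at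
most `2 k G(S)`.
-/

open Finset

theorem List.Pairwise.countP_lt_le_iff_getElem_le {α : Type*} [LinearOrder α] {L : List α}
    (hL : L.Pairwise (· ≥ ·)) {k : ℕ} (hk : k < L.length) (c : α) :
    L.countP (c < ·) ≤ k ↔ L[k] ≤ c := by
  constructor
  · intro hcount
    by_contra! hlt
    have hprefix : ∀ a ∈ L.take (k + 1), c < a := by
      have htake := hL.take (i := k + 1)
      rw [← List.take_concat_get' L k hk, List.pairwise_append] at htake
      rw [← List.take_concat_get' L k hk]
      simp only [List.mem_append, List.mem_singleton]
      rintro a (ha | rfl)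
      · exact hlt.trans_le (htake.2.2 a ha _ (List.mem_singleton_self _))
      · exact hlt
    have := (L.take_sublist (k + 1)).countP_le (p := (c < ·))
    rw [List.countP_eq_length.2 (by simpa using hprefix), List.length_take_of_le hk] at this
    omega
  · intro hle
    have hsuffix : (L.drop k).countP (c < ·) = 0 := by
      have hdrop := hL.drop (i := k)
      rw [List.drop_eq_getElem_cons hk, List.pairwise_cons] at hdrop
      rw [List.drop_eq_getElem_cons hk, List.countP_eq_zero]
      simp only [List.mem_cons, decide_eq_true_eq, not_lt]
      rintro a (rfl | ha)
      · exact hle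
      · exact (hdrop.1 a ha).trans hle
    calc L.countP (c < ·) = (L.take k).countP (c < ·) + (L.drop k).countP (c < ·) := by
          rw [← List.countP_append, List.take_append_drop]
      _ ≤ k := by rw [hsuffix]; exact List.countP_le_length.trans (by simp)

theorem kthLargest_le_iff {k : ℕ} {l : List ℝ} {c : ℝ} (hc : 0 ≤ c) :
    kthLargest k l ≤ c ↔ l.countP (c < ·) ≤ k := by
  set L := l.mergeSort (fun a b => decide (b ≤ a))
  have hsorted : L.Pairwise (· ≥ ·) := by
    simpa using List.pairwise_mergeSort (le := fun a b : ℝ => decide (b ≤ a))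
      (fun a b c hab hbc => by simp_all only [decide_eq_true_eq]; exact hbc.trans hab)
      (fun a b => by simpa using le_total b a) l
  rw [← (l.mergeSort_perm _).countP_eq, kthLargest, List.getD_eq_getElem?_getD]
  by_cases hk : k < L.length
  · rw [List.getElem?_eq_getElem hk, Option.getD_some, hsorted.countP_lt_le_iff_getElem_le hk]
  · rw [List.getElem?_eq_none (not_lt.1 hk), Option.getD_none]
    exact iff_of_true hc (List.countP_le_length.trans (not_lt.1 hk))

section Doubling

variable {ι : Type*} [LinearOrder ι] (v : ι → ℝ) (k : ℕ) {A : Finset ι}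

theorem card_filter_half_lt_le_of_few_large_predecessors
    (hA : ∀ t ∈ A, #{i ∈ A | i ≤ t ∧ v t / 2 < v i} ≤ k) {M : ℝ} (hM : ∀ t ∈ A, v t ≤ M) :
    #{i ∈ A | M / 2 < v i} ≤ k := by
  rcases {i ∈ A | M / 2 < v i}.eq_empty_or_nonempty with hempty | hne
  · simp [hempty]
  obtain ⟨hlastA, -⟩ := mem_filter.1 (max'_mem _ hne)
  refine (card_le_card fun i hi => ?_).trans (hA _ hlastA)
  obtain ⟨hiA, hlarge⟩ := mem_filter.1 hi
  exact mem_filter.2 ⟨hiA, le_max' _ _ hi, by linarith [hM _ hlastA]⟩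

theorem sum_le_two_mul_of_few_large_predecessors
    (hA : ∀ t ∈ A, #{i ∈ A | i ≤ t ∧ v t / 2 < v i} ≤ k) {M : ℝ} (hM₀ : 0 ≤ M)
    (hM : ∀ t ∈ A, v t ≤ M) :
    ∑ t ∈ A, v t ≤ 2 * k * M := by
  induction A using Finset.strongInduction generalizing M with
  | H A ih =>
  rcases A.eq_empty_or_nonempty with rfl | hne
  · simp only [sum_empty]; positivity
  set M' := A.sup' hne v
  have hM' : ∀ t ∈ A, v t ≤ M' := fun t ht => le_sup' v ht
  have hM'M : M' ≤ M := sup'_le hne v hM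
  by_cases hM'₀ : M' ≤ 0
  · calc ∑ t ∈ A, v t ≤ ∑ _t ∈ A, (0 : ℝ) := sum_le_sum fun t ht => (hM' t ht).trans hM'₀
      _ ≤ 2 * k * M := by simp only [sum_const_zero]; positivity
  obtain ⟨t₀, ht₀, hM't₀⟩ : ∃ t₀ ∈ A, M' = v t₀ := exists_mem_eq_sup' hne v
  have hlarge : ∑ t ∈ A with M' / 2 < v t, v t ≤ k * M' := by
    calc ∑ t ∈ A with M' / 2 < v t, v t
        ≤ #{i ∈ A | M' / 2 < v i} • M' :=
          sum_le_card_nsmul _ _ _ fun t ht => hM' t (mem_filter.1 ht).1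
      _ ≤ k * M' := by
        rw [nsmul_eq_mul]
        gcongr
        · linarith
        · exact_mod_cast card_filter_half_lt_le_of_few_large_predecessors v k hA hM'
  have hsmall : ∑ t ∈ A with ¬M' / 2 < v t, v t ≤ 2 * k * (M' / 2) := by
    have hssubset : {t ∈ A | ¬M' / 2 < v t} ⊂ A :=
      filter_ssubset.2 ⟨t₀, ht₀, not_not.2 (by linarith)⟩
    refine ih _ hssubset (fun t ht => ?_) (by linarith) fun t ht => not_lt.1 (mem_filter.1 ht).2
    exact (card_le_card (filter_subset_filter _ (filter_subset _ _))).trans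
      (hA t (mem_filter.1 ht).1)
  calc ∑ t ∈ A, v t = ∑ t ∈ A with M' / 2 < v t, v t + ∑ t ∈ A with ¬M' / 2 < v t, v t :=
        (sum_filter_add_sum_filter_not _ _ _).symm
    _ ≤ 2 * k * M := by nlinarith

end Doubling

section TopkFilter

variable {E : Type*} [NormedAddCommGroup E] [NormedSpace ℝ E] (g : ℕ → E →L[ℝ] ℝ)
  {k T t : ℕ} {S : Finset ℕ}

theorem topkThresh_le_iff {c : ℝ} (hc : 0 ≤ c) :
    topkThresh g k t ≤ c ↔ #{i ∈ range (t + 1) | c < ‖g i‖} ≤ k := by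
  rw [topkThresh, kthLargest_le_iff hc, List.countP_map]
  change (List.range (t + 1)).countP (fun i => decide (c < ‖g i‖)) ≤ k ↔ _
  rw [← Multiset.coe_countP, ← Multiset.range, Multiset.countP_eq_card_filter]
  rfl

theorem gradMax_nonneg : 0 ≤ gradMax g S := NNReal.coe_nonneg _

theorem norm_le_gradMax (ht : t ∈ S) : ‖g t‖ ≤ gradMax g S :=
  NNReal.coe_le_coe.2 (le_sup (f := fun t => ‖g t‖₊) ht)

theorem card_range_sdiff_le (hS : S ⊆ range T) (hSk : T - #S ≤ k) : #(range T \ S) ≤ k := by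
  rwa [card_sdiff_of_subset hS, card_range]

theorem topkThresh_le_gradMax (hS : S ⊆ range T) (hSk : T - #S ≤ k) (ht : t < T) :
    topkThresh g k t ≤ gradMax g S := by
  rw [topkThresh_le_iff g (gradMax_nonneg g)]
  refine (card_le_card fun i hi => ?_).trans (card_range_sdiff_le hS hSk)
  obtain ⟨hit, hlarge⟩ := mem_filter.1 hi
  exact mem_sdiff.2 ⟨mem_range.2 (by simp at hit; omega),
    fun hiS => (norm_le_gradMax g hiS).not_gt hlarge⟩

theorem norm_le_two_mul_gradMax_of_mem_topkPassed (hS : S ⊆ range T) (hSk : T - #S ≤ k)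
    (ht : t ∈ topkPassed g k T) : ‖g t‖ ≤ 2 * gradMax g S := by
  obtain ⟨htT, hpass⟩ := mem_filter.1 ht
  linarith [topkThresh_le_gradMax g hS hSk (mem_range.1 htT)]

theorem card_large_predecessors_le_of_notMem_topkPassed (ht : t < T)
    (htP : t ∉ topkPassed g k T) : #{i ∈ range (t + 1) | ‖g t‖ / 2 < ‖g i‖} ≤ k := by
  rw [← topkThresh_le_iff g (by positivity)]
  by_contra! h
  exact htP (mem_filter.2 ⟨mem_range.2 ht, by linarith⟩)

theorem norm_sub_le_distMax (w : ℕ → E) (u : E) (ht : t < T) (hgt : ‖g t‖ ≤ 2 * gradMax g S) :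
    ‖w t - u‖ ≤ distMax g w u T S :=
  NNReal.coe_le_coe.2 (le_sup (f := fun t => ‖w t - u‖₊) (mem_filter.2 ⟨mem_range.2 ht, hgt⟩))

theorem sum_abs_apply_sub_le (w : ℕ → E) (u : E) (hS : S ⊆ range T) (hSk : T - #S ≤ k)
    {A : Finset ℕ} (hA : A ⊆ S ∪ topkPassed g k T) :
    ∑ t ∈ A, |g t (w t - u)| ≤ (∑ t ∈ A, ‖g t‖) * distMax g w u T S := by
  rw [sum_mul]
  refine sum_le_sum fun t ht => ?_
  have hround : t < T ∧ ‖g t‖ ≤ 2 * gradMax g S := by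
    rcases mem_union.1 (hA ht) with htS | htP
    · exact ⟨mem_range.1 (hS htS), by linarith [norm_le_gradMax g htS, gradMax_nonneg g (S := S)]⟩
    · exact ⟨mem_range.1 (mem_filter.1 htP).1,
        norm_le_two_mul_gradMax_of_mem_topkPassed g hS hSk htP⟩
  calc |g t (w t - u)| ≤ ‖g t‖ * ‖w t - u‖ := (g t).le_opNorm (w t - u)
    _ ≤ ‖g t‖ * distMax g w u T S := by
      gcongr
      exact norm_sub_le_distMax g w u hround.1 hround.2

theorem sum_norm_sdiff_topkPassed_le (hS : S ⊆ range T) :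
    ∑ t ∈ S \ topkPassed g k T, ‖g t‖ ≤ 2 * k * gradMax g S := by
  refine sum_le_two_mul_of_few_large_predecessors _ _ (fun t ht => ?_) (gradMax_nonneg g)
    fun t ht => norm_le_gradMax g (mem_sdiff.1 ht).1
  obtain ⟨htS, htP⟩ := mem_sdiff.1 ht
  refine (card_le_card fun i hi => ?_).trans
    (card_large_predecessors_le_of_notMem_topkPassed g (mem_range.1 (hS htS)) htP)
  simp only [mem_filter, mem_range] at hi ⊢
  exact ⟨Nat.lt_succ_of_le hi.2.1, hi.2.2⟩

theorem sum_norm_topkPassed_sdiff_le (hS : S ⊆ range T) (hSk : T - #S ≤ k) :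
    ∑ t ∈ topkPassed g k T \ S, ‖g t‖ ≤ 2 * k * gradMax g S := by
  have hcard : #(topkPassed g k T \ S) ≤ k :=
    (card_le_card (sdiff_subset_sdiff (filter_subset _ _) subset_rfl)).trans
      (card_range_sdiff_le hS hSk)
  calc ∑ t ∈ topkPassed g k T \ S, ‖g t‖
      ≤ #(topkPassed g k T \ S) • (2 * gradMax g S) :=
        sum_le_card_nsmul _ _ _ fun t ht =>
          norm_le_two_mul_gradMax_of_mem_topkPassed g hS hSk (mem_sdiff.1 ht).1
    _ ≤ k * (2 * gradMax g S) := by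
      rw [nsmul_eq_mul]
      exact mul_le_mul_of_nonneg_right (mod_cast hcard) (by linarith [gradMax_nonneg g (S := S)])
    _ = 2 * k * gradMax g S := by ring

end TopkFilter

theorem topk_filter_robust_regret_general
    {E : Type*} [NormedAddCommGroup E] [NormedSpace ℝ E]
    (T k : ℕ)
    (w : ℕ → E)
    (g : ℕ → E →L[ℝ] ℝ)
    (S : Finset ℕ) (hS : S ⊆ Finset.range T) (hSk : T - S.card ≤ k)
    (u : E)
    (B : ℝ) (hB : ∑ t ∈ topkPassed g k T, g t (w t - u) ≤ B) :
    ∑ t ∈ S, g t (w t - u) ≤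
      B + 4 * distMax g w u T S * gradMax g S * (k + 1) := by
  set P := topkPassed g k T
  set G := gradMax g S
  set D := distMax g w u T S
  have hSP : ∑ t ∈ S \ P, g t (w t - u) ≤ (∑ t ∈ S \ P, ‖g t‖) * D :=
    (sum_le_sum fun t _ => le_abs_self _).trans <| sum_abs_apply_sub_le g w u hS hSk
      (sdiff_subset.trans subset_union_left)
  have hPS : -∑ t ∈ P \ S, g t (w t - u) ≤ (∑ t ∈ P \ S, ‖g t‖) * D :=
    (neg_le_abs _).trans <| (abs_sum_le_sum_abs _ _).trans <| sum_abs_apply_sub_le g w u hS hSk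
      (sdiff_subset.trans subset_union_right)
  have hG : 0 ≤ G := gradMax_nonneg g
  have hD : 0 ≤ D := NNReal.coe_nonneg _
  calc ∑ t ∈ S, g t (w t - u)
      = ∑ t ∈ P, g t (w t - u) + (∑ t ∈ S \ P, g t (w t - u) - ∑ t ∈ P \ S, g t (w t - u)) := by
        rw [sum_sdiff_sub_sum_sdiff]; ring
    _ ≤ B + ((∑ t ∈ S \ P, ‖g t‖) * D + (∑ t ∈ P \ S, ‖g t‖) * D) := by linarith
    _ ≤ B + (2 * k * G * D + 2 * k * G * D) := by
        gcongr
        · exact sum_norm_sdiff_topkPassed_le g hS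
        · exact sum_norm_topkPassed_sdiff_le g hS hSk
    _ ≤ B + 4 * D * G * (k + 1) := by nlinarith [mul_nonneg hG hD]

/-- if the linearized regret of the base algorithm on the passed rounds is
at most `B`, then the linearized robust regret on any set `S` with at most `k` outliers
is at most `B + 4 D(u,S) G(S) (k+1)`. -/
theorem topk_filter_robust_regret
    {E : Type*} [NormedAddCommGroup E] [NormedSpace ℝ E] [FiniteDimensional ℝ E]
    (W : Set E) (hWne : W.Nonempty) (hWcomp : IsCompact W) (hWconv : Convex ℝ W)
    (T k : ℕ) (hT : 1 ≤ T)
    (w : ℕ → E) (hw : ∀ t ∈ Finset.range T, w t ∈ W)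
    (g : ℕ → E →L[ℝ] ℝ)
    (S : Finset ℕ) (hS : S ⊆ Finset.range T) (hSk : T - S.card ≤ k)
    (u : E) (hu : u ∈ W)
    (B : ℝ) (hB : ∑ t ∈ topkPassed g k T, g t (w t - u) ≤ B) :
    ∑ t ∈ S, g t (w t - u) ≤
      B + 4 * distMax g w u T S * gradMax g S * (k + 1) :=
  topk_filter_robust_regret_general T k w g S hS hSk u B hB
end

section
/- Fix integers T ≥ 1 and k ≥ 0 and gradients g_1,…,g_T ∈ E*, and let F be the set of filtered rounds of the Top-k Filter with parameter k. Then for every real G > 0, the sum of the dual norms of the filtered gradients that do not exceed G is at most 2(k+1)G, i.e. Σ_{t ∈ F : ‖g_t‖_* ≤ G} ‖g_t‖_* ≤ 2(k+1)·G. -/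
/-- The set of rounds in `{0, …, T-1}` filtered out by the Top-k Filter. -/
noncomputable def topkFiltered {E : Type*} [NormedAddCommGroup E] [NormedSpace ℝ E]
    (g : ℕ → E →L[ℝ] ℝ) (k T : ℕ) : Finset ℕ :=
  (Finset.range T).filter fun t => ¬ (‖g t‖ ≤ 2 * topkThresh g k t)

private lemma aux_getD : ∀ (l : List ℝ) (k : ℕ) (c : ℝ),
    l.Pairwise (fun a b => b ≤ a) →
    k + 1 ≤ l.countP (fun x => decide (c < x)) → c < l.getD k 0
  | [], k, c, _, h => by simp at h
  | a :: l, 0, c, hs, h => by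
      simp only [List.getD_cons_zero]
      by_contra hca
      push_neg at hca
      rw [List.countP_cons, if_neg (by simp [not_lt.2 hca])] at h
      obtain ⟨x, hx, hcx⟩ := List.countP_pos_iff.mp (by omega : 0 < l.countP (fun x => decide (c < x)))
      have : x ≤ a := (List.pairwise_cons.mp hs).1 x hx
      simp at hcx
      linarith
  | a :: l, k + 1, c, hs, h => by
      simp only [List.getD_cons_succ]
      apply aux_getD l k c (List.pairwise_cons.mp hs).2
      rw [List.countP_cons] at h
      split at h <;> omega

private lemma sorted_merge (l : List ℝ) :
    (l.mergeSort (fun a b => decide (b ≤ a))).Pairwise (fun a b => b ≤ a) := by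
  have := List.pairwise_mergeSort (le := fun a b : ℝ => decide (b ≤ a))
    (by intro a b c hab hbc; simp at *; linarith)
    (by intro a b; simp [le_total b a]) l
  exact this.imp (by simp)

private lemma thresh_nonneg {E : Type*} [NormedAddCommGroup E] [NormedSpace ℝ E]
    (g : ℕ → E →L[ℝ] ℝ) (k t : ℕ) : 0 ≤ topkThresh g k t := by
  unfold topkThresh kthLargest
  set l := ((List.range (t + 1)).map fun s => ‖g s‖) with hl
  set m := l.mergeSort (fun a b => decide (b ≤ a)) with hm
  rcases lt_or_ge k m.length with h | h
  · rw [List.getD_eq_getElem _ _ h]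
    have hmem : m[k] ∈ m := List.getElem_mem h
    have : m[k] ∈ l := (List.mergeSort_perm l _).mem_iff.mp hmem
    rw [hl] at this
    obtain ⟨s, _, hs⟩ := List.mem_map.mp this
    rw [← hs]; exact norm_nonneg _
  · rw [List.getD_eq_default _ _ h]

private lemma thresh_lt {E : Type*} [NormedAddCommGroup E] [NormedSpace ℝ E]
    (g : ℕ → E →L[ℝ] ℝ) (k t : ℕ) (c : ℝ)
    (h : k + 1 ≤ ((Finset.range (t + 1)).filter fun s => c < ‖g s‖).card) :
    c < topkThresh g k t := by
  unfold topkThresh kthLargest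
  apply aux_getD _ _ _ (sorted_merge _)
  rw [(List.mergeSort_perm _ _).countP_eq, List.countP_map]
  have : ((Finset.range (t+1)).filter fun s => c < ‖g s‖).card
      = (List.range (t+1)).countP (fun s => decide (c < ‖g s‖)) := by
    simp [Finset.filter, Finset.card, Finset.range, Multiset.range, Multiset.filter_coe,
      List.countP_eq_length_filter]
  simp only [Function.comp_def]
  rw [← this]
  exact h

private lemma bucket {E : Type*} [NormedAddCommGroup E] [NormedSpace ℝ E]
    (g : ℕ → E →L[ℝ] ℝ) (k T : ℕ) (a : ℝ) :
    ((topkFiltered g k T).filter fun t => a/2 < ‖g t‖ ∧ ‖g t‖ ≤ a).card ≤ k + 1 := by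
  by_contra hcard
  push_neg at hcard
  set B := (topkFiltered g k T).filter fun t => a/2 < ‖g t‖ ∧ ‖g t‖ ≤ a with hB
  have hne : B.Nonempty := Finset.card_pos.mp (by omega)
  set t0 := B.max' hne with ht0
  have ht0B : t0 ∈ B := B.max'_mem hne
  have hsub : B.erase t0 ⊆ (Finset.range (t0 + 1)).filter fun s => a/2 < ‖g s‖ := by
    intro s hs
    rw [Finset.mem_erase] at hs
    have hle : s ≤ t0 := B.le_max' s hs.2
    rw [Finset.mem_filter, Finset.mem_range]
    exact ⟨by omega, ((Finset.mem_filter.mp hs.2).2).1⟩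
  have hc : k + 1 ≤ ((Finset.range (t0 + 1)).filter fun s => a/2 < ‖g s‖).card := by
    have := Finset.card_le_card hsub
    rw [Finset.card_erase_of_mem ht0B] at this
    omega
  have hlt := thresh_lt g k t0 _ hc
  have h1 := (Finset.mem_filter.mp ht0B).2
  have h2 := Finset.mem_filter.mp (Finset.mem_filter.mp ht0B).1
  exact h2.2 (by linarith [h1.2])

private lemma main_ind {E : Type*} [NormedAddCommGroup E] [NormedSpace ℝ E]
    (g : ℕ → E →L[ℝ] ℝ) (k T : ℕ) :
    ∀ n : ℕ, ∀ G : ℝ, 0 < G →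
      ((topkFiltered g k T).filter fun t => ‖g t‖ ≤ G).card ≤ n →
      ∑ t ∈ (topkFiltered g k T).filter (fun t => ‖g t‖ ≤ G), ‖g t‖ ≤ 2 * (k + 1) * G := by
  intro n
  induction n with
  | zero =>
    intro G hG hcard
    rw [Finset.card_eq_zero.mp (Nat.le_zero.mp hcard), Finset.sum_empty]
    positivity
  | succ n ih =>
    intro G hG hcard
    set S := (topkFiltered g k T).filter fun t => ‖g t‖ ≤ G with hS
    rcases S.eq_empty_or_nonempty with he | hne
    · rw [he, Finset.sum_empty]; positivity
    · obtain ⟨t0, ht0S, ht0max⟩ := S.exists_max_image (fun t => ‖g t‖) hne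
      set a := ‖g t0‖ with ha
      have haG : a ≤ G := (Finset.mem_filter.mp ht0S).2
      have hfil := Finset.mem_filter.mp (Finset.mem_filter.mp ht0S).1
      have ha0 : 0 < a := by
        have h0 := thresh_nonneg g k t0
        have := hfil.2
        push_neg at this
        linarith
      -- split the sum
      have hsplit := Finset.sum_filter_add_sum_filter_not S (fun t => ‖g t‖ ≤ a/2)
        (fun t => ‖g t‖)
      -- first part equals S(a/2)
      have hSeq : S.filter (fun t => ‖g t‖ ≤ a/2) =
          (topkFiltered g k T).filter fun t => ‖g t‖ ≤ a/2 := by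
        rw [hS, Finset.filter_filter]
        apply Finset.filter_congr
        intro t _
        constructor
        · intro h; exact h.2
        · intro h; exact ⟨by linarith, h⟩
      have hcard2 : ((topkFiltered g k T).filter fun t => ‖g t‖ ≤ a/2).card ≤ n := by
        have hsub : ((topkFiltered g k T).filter fun t => ‖g t‖ ≤ a/2) ⊆ S.erase t0 := by
          intro t ht
          rw [Finset.mem_erase]
          have h1 := Finset.mem_filter.mp ht
          constructor
          · intro h; rw [h] at h1; linarith [h1.2]
          · exact Finset.mem_filter.mpr ⟨h1.1, by linarith [h1.2]⟩
        have := Finset.card_le_card hsub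
        rw [Finset.card_erase_of_mem ht0S] at this
        omega
      have hpart1 : ∑ t ∈ S.filter (fun t => ‖g t‖ ≤ a/2), ‖g t‖ ≤ (k + 1) * a := by
        rw [hSeq]
        have := ih (a/2) (by linarith) hcard2
        linarith
      have hpart2 : ∑ t ∈ S.filter (fun t => ¬ ‖g t‖ ≤ a/2), ‖g t‖ ≤ (k + 1) * a := by
        have hsub : S.filter (fun t => ¬ ‖g t‖ ≤ a/2) ⊆
            (topkFiltered g k T).filter fun t => a/2 < ‖g t‖ ∧ ‖g t‖ ≤ a := by
          intro t ht
          have h1 := Finset.mem_filter.mp ht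
          have h2 := Finset.mem_filter.mp h1.1
          exact Finset.mem_filter.mpr ⟨h2.1, not_le.mp h1.2, ht0max t h1.1⟩
        calc ∑ t ∈ S.filter (fun t => ¬ ‖g t‖ ≤ a/2), ‖g t‖
            ≤ (S.filter (fun t => ¬ ‖g t‖ ≤ a/2)).card • a := by
              apply Finset.sum_le_card_nsmul
              intro t ht
              exact ht0max t (Finset.mem_filter.mp ht).1
          _ ≤ (k + 1) • a := by
              apply smul_le_smul_of_nonneg_right _ ha0.le
              exact le_trans (Finset.card_le_card hsub) (bucket g k T a)
          _ = (k + 1) * a := by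
              rw [nsmul_eq_mul]; push_cast; ring
      have h2k : (0:ℝ) ≤ 2 * (k + 1) := by positivity
      calc ∑ t ∈ S, ‖g t‖ = _ + _ := hsplit.symm
        _ ≤ 2 * (k + 1) * a := by linarith
        _ ≤ 2 * (k + 1) * G := by
            apply mul_le_mul_of_nonneg_left haG h2k

/-- the total dual norm of filtered gradients of norm at most `G` is at
most `2 (k+1) G`. -/
theorem topk_filter_filtered_norm_sum
    {E : Type*} [NormedAddCommGroup E] [NormedSpace ℝ E] [FiniteDimensional ℝ E]
    (T k : ℕ) (hT : 1 ≤ T)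
    (g : ℕ → E →L[ℝ] ℝ)
    (G : ℝ) (hG : 0 < G) :
    ∑ t ∈ (topkFiltered g k T).filter (fun t => ‖g t‖ ≤ G), ‖g t‖ ≤ 2 * (k + 1) * G := by
  exact main_ind g k T _ G hG le_rfl
end

section
/- In the Huber ε-contamination setting, suppose additionally that |f(w, ξ) − f(u_P, ξ)| ≤ B for all w ∈ W for P-almost every ξ, where u_P ∈ argmin_{w∈W} risk_P(w). Let w_t : Ξ^{t−1} → W be measurable prediction functions and w̄_T = (1/T)·Σ_{t=1}^T w_t. Then for every 0 < δ ≤ 1, with P_ε-probability at least 1 − δ: risk_P(w̄_T) − risk_P(u_P) ≤ (Σ_{t : M_t = 0} (f(w_t, ξ_t) − f(u_P, ξ_t))) / ((1−ε)·T) + (2B/(1−ε))·√((2/T)·ln(1/δ)). -/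
/-!
With `Δ v = ∫ (f v - f uP) dP`, the increments
`D t = (1 - ε) Δ (w t) - 1{M t = false} (f (w t) (ξ t) - f uP (ξ t))` have mean zero given the
past, because `(M t, ξ t)` is a fresh draw independent of `w t`, and they lie a.s. in an interval
of length `2B`. Hoeffding's lemma and conditioning on the past make `∑ D t` sub-Gaussian with
variance proxy `T B²` (Azuma–Hoeffding), so `∑ D t ≤ B √(2 T log (1/δ))` with probability at
least `1 - δ`. Jensen's inequality for the convex risk bounds the excess risk of the average
iterate by `(1/T) ∑ Δ (w t) = (∑ inlier regret + ∑ D t) / ((1 - ε) T)`.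
-/

open MeasureTheory ProbabilityTheory Real
open scoped ENNReal NNReal

section Past

variable {Ω E : Type*} [MeasurableSpace E]

/-- `σ(Z 0, …, Z (n - 1))`: the draws strictly before time `n`. -/
abbrev pastMeasurableSpace (Z : ℕ → Ω → E) (n : ℕ) : MeasurableSpace Ω :=
  MeasurableSpace.comap (fun ω (s : Fin n) => Z s ω) inferInstance

variable {Z : ℕ → Ω → E}

lemma measurable_pastMeasurableSpace {t n : ℕ} (htn : t < n) :
    Measurable[pastMeasurableSpace Z n] (Z t) :=
  fun _ hs => ⟨_, measurable_pi_apply (⟨t, htn⟩ : Fin n) hs, rfl⟩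

lemma pastMeasurableSpace_mono {t n : ℕ} (htn : t ≤ n) :
    pastMeasurableSpace Z t ≤ pastMeasurableSpace Z n :=
  (@measurable_pi_lambda _ _ _ (pastMeasurableSpace Z n) _ _ fun s =>
    measurable_pastMeasurableSpace (lt_of_lt_of_le s.isLt htn)).comap_le

lemma comap_comp_le_pastMeasurableSpace {F : Type*} [MeasurableSpace F] {g : E → F}
    (hg : Measurable g) (n : ℕ) :
    MeasurableSpace.comap (fun ω (s : Fin n) => g (Z s ω)) inferInstance ≤
      pastMeasurableSpace Z n :=
  (@measurable_pi_lambda _ _ _ (pastMeasurableSpace Z n) _ _ fun s =>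
    hg.comp (measurable_pastMeasurableSpace s.isLt)).comap_le

lemma measurable_sum_predictable {α : Type*} [MeasurableSpace α] {A : ℕ → Ω → α}
    {φ : α → E → ℝ} (hA : ∀ t, Measurable[pastMeasurableSpace Z t] (A t))
    (hφ : Measurable (Function.uncurry φ)) (n : ℕ) :
    Measurable[pastMeasurableSpace Z n] fun ω => ∑ t ∈ Finset.range n, φ (A t ω) (Z t ω) :=
  Finset.measurable_sum _ fun t ht => hφ.comp
    (((hA t).mono (pastMeasurableSpace_mono (Finset.mem_range.1 ht).le) le_rfl).prodMk
      (measurable_pastMeasurableSpace (Finset.mem_range.1 ht)))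

lemma pastMeasurableSpace_le [MeasurableSpace Ω] (hZ : ∀ t, Measurable (Z t)) (n : ℕ) :
    pastMeasurableSpace Z n ≤ ‹MeasurableSpace Ω› :=
  (measurable_pi_lambda (fun ω (s : Fin n) => Z s ω) fun s => hZ s).comap_le

lemma ProbabilityTheory.iIndepFun.indepFun_of_measurable_past [MeasurableSpace Ω]
    {μ : Measure Ω} (hZ : ∀ t, Measurable (Z t)) (hind : iIndepFun Z μ) {β : Type*}
    [MeasurableSpace β] {U : Ω → β} {n : ℕ}
    (hU : Measurable[pastMeasurableSpace Z n] U) : IndepFun U (Z n) μ := by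
  have hpast : pastMeasurableSpace Z n ≤
      MeasurableSpace.comap (fun ω (i : Finset.range n) => Z i ω) inferInstance :=
    (@measurable_pi_lambda _ _ _ (MeasurableSpace.comap (fun ω (i : Finset.range n) => Z i ω)
      inferInstance) _ _ fun (s : Fin n) _ hA =>
        ⟨_, measurable_pi_apply (⟨s, Finset.mem_range.2 s.isLt⟩ : Finset.range n) hA,
          rfl⟩).comap_le
  have hnow : MeasurableSpace.comap (Z n) inferInstance ≤
      MeasurableSpace.comap (fun ω (i : ({n} : Finset ℕ)) => Z i ω) inferInstance :=
    fun _ ⟨A, hA, hpre⟩ => ⟨_, measurable_pi_apply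
      (⟨n, Finset.mem_singleton_self n⟩ : ({n} : Finset ℕ)) hA, hpre⟩
  exact indep_of_indep_of_le_right (indep_of_indep_of_le_left
    (hind.indepFun_finset _ _ (by simp) hZ) (hU.comap_le.trans hpast)) hnow

end Past

lemma ProbabilityTheory.IndepFun.lintegral_comp_eq {Ω β γ : Type*} [MeasurableSpace Ω]
    [MeasurableSpace β] [MeasurableSpace γ] {μ : Measure Ω} [IsFiniteMeasure μ]
    {U : Ω → β} {V : Ω → γ} (hUV : IndepFun U V μ) (hU : Measurable U) (hV : Measurable V) {F : β → γ → ℝ≥0∞}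
    (hF : Measurable (Function.uncurry F)) :
    ∫⁻ ω, F (U ω) (V ω) ∂μ = ∫⁻ ω, ∫⁻ y, F (U ω) y ∂(μ.map V) ∂μ := by
  calc ∫⁻ ω, F (U ω) (V ω) ∂μ = ∫⁻ p, Function.uncurry F p ∂(μ.map fun ω => (U ω, V ω)) :=
        (lintegral_map hF (hU.prodMk hV)).symm
    _ = ∫⁻ p, Function.uncurry F p ∂((μ.map U).prod (μ.map V)) := by
        rw [(indepFun_iff_map_prod_eq_prod_map_map hU.aemeasurable hV.aemeasurable).1 hUV]
    _ = ∫⁻ u, ∫⁻ y, F u y ∂(μ.map V) ∂(μ.map U) := lintegral_prod _ hF.aemeasurable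
    _ = ∫⁻ ω, ∫⁻ y, F (U ω) y ∂(μ.map V) ∂μ := lintegral_map hF.lintegral_prod_right' hU

namespace ProbabilityTheory.HasSubgaussianMGF

variable {Ω : Type*} [MeasurableSpace Ω] {μ : Measure Ω} {X : Ω → ℝ} {c : ℝ≥0}

lemma lintegral_exp_mul_le (h : HasSubgaussianMGF X c μ) (t : ℝ) :
    ∫⁻ ω, ENNReal.ofReal (exp (t * X ω)) ∂μ ≤ ENNReal.ofReal (exp (c * t ^ 2 / 2)) := by
  rw [← ofReal_integral_eq_lintegral_ofReal (h.integrable_exp_mul t)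
    (Filter.Eventually.of_forall fun ω => (exp_pos _).le)]
  exact ENNReal.ofReal_le_ofReal (h.mgf_le t)

lemma of_lintegral_exp_mul_le (hX : Measurable X)
    (h : ∀ t : ℝ, ∫⁻ ω, ENNReal.ofReal (exp (t * X ω)) ∂μ ≤ ENNReal.ofReal (exp (c * t ^ 2 / 2))) :
    HasSubgaussianMGF X c μ := by
  have hint : ∀ t : ℝ, Integrable (fun ω => exp (t * X ω)) μ := fun t =>
    ⟨(hX.const_mul t).exp.aestronglyMeasurable, by
      simp only [HasFiniteIntegral, Real.enorm_eq_ofReal (exp_pos _).le]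
      exact (h t).trans_lt ENNReal.ofReal_lt_top⟩
  refine ⟨hint, fun t => ?_⟩
  rw [mgf, integral_eq_lintegral_of_nonneg_ae
    (Filter.Eventually.of_forall fun ω => (exp_pos _).le) (hint t).1]
  exact ENNReal.toReal_le_of_le_ofReal (exp_pos _).le (h t)

lemma measure_lt_le [IsFiniteMeasure μ] (h : HasSubgaussianMGF X c μ) {L s : ℝ} (hL : 0 ≤ L)
    (hs : √(2 * c * L) ≤ s) :
    μ {ω | s < X ω} ≤ ENNReal.ofReal (exp (-L)) := by
  rcases eq_zero_or_pos c with rfl | hc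
  · have hs0 : 0 ≤ s := (Real.sqrt_nonneg _).trans hs
    refine (measure_mono_null (fun ω (hω : s < X ω) => ?_)
      (ae_iff.1 h.ae_eq_zero_of_hasSubgaussianMGF_zero)).trans_le bot_le
    exact fun h0 => by simp only [Pi.zero_apply] at h0; linarith
  calc μ {ω | s < X ω} ≤ μ {ω | √(2 * c * L) ≤ X ω} :=
        measure_mono fun ω (hω : s < X ω) => hs.trans hω.le
    _ = ENNReal.ofReal (μ.real {ω | √(2 * c * L) ≤ X ω}) :=
        (ofReal_measureReal (measure_ne_top μ _)).symm
    _ ≤ ENNReal.ofReal (exp (-L)) := by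
        refine ENNReal.ofReal_le_ofReal ((h.measure_ge_le (Real.sqrt_nonneg _)).trans_eq ?_)
        rw [Real.sq_sqrt (by positivity)]
        field_simp

end ProbabilityTheory.HasSubgaussianMGF

section AzumaHoeffding

variable {Ω E α : Type*} [MeasurableSpace Ω] [MeasurableSpace E] [MeasurableSpace α]
  {μ : Measure Ω} {Z : ℕ → Ω → E} {ν : Measure E} {A : ℕ → Ω → α} {φ : α → E → ℝ}

/-- Azuma–Hoeffding inequality for a sum whose `t`-th term `φ (A t) (Z t)` combines a fresh
independent draw `Z t ∼ ν` with a state `A t` determined by the earlier draws. -/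
theorem hasSubgaussianMGF_sum_predictable (hZ : ∀ t, Measurable (Z t)) (hind : iIndepFun Z μ)
    (hlaw : ∀ t, μ.map (Z t) = ν) (hA : ∀ t, Measurable[pastMeasurableSpace Z t] (A t))
    (hφ : Measurable (Function.uncurry φ)) {c : ℝ≥0}
    (hsub : ∀ t ω, HasSubgaussianMGF (φ (A t ω)) c ν) (n : ℕ) :
    HasSubgaussianMGF (fun ω => ∑ t ∈ Finset.range n, φ (A t ω) (Z t ω)) (n * c) μ := by
  have := hind.isProbabilityMeasure
  set S : ℕ → Ω → ℝ := fun n ω => ∑ t ∈ Finset.range n, φ (A t ω) (Z t ω)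
  have hS : ∀ n, Measurable (S n) := fun n =>
    (measurable_sum_predictable hA hφ n).mono (pastMeasurableSpace_le hZ n) le_rfl
  refine HasSubgaussianMGF.of_lintegral_exp_mul_le (hS n) fun t => ?_
  induction n with
  | zero => simp
  | succ n ih =>
    have hU : Measurable[pastMeasurableSpace Z n] fun ω => (S n ω, A n ω) :=
      (measurable_sum_predictable hA hφ n).prodMk (hA n)
    have hF : Measurable (Function.uncurry fun (p : ℝ × α) (z : E) =>
        ENNReal.ofReal (exp (t * p.1)) * ENNReal.ofReal (exp (t * φ p.2 z))) := by
      fun_prop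
    calc ∫⁻ ω, ENNReal.ofReal (exp (t * S (n + 1) ω)) ∂μ
        = ∫⁻ ω, ENNReal.ofReal (exp (t * S n ω)) *
            ENNReal.ofReal (exp (t * φ (A n ω) (Z n ω))) ∂μ := by
          simp only [S, Finset.sum_range_succ, mul_add, exp_add,
            ENNReal.ofReal_mul (exp_pos _).le]
      _ = ∫⁻ ω, ENNReal.ofReal (exp (t * S n ω)) *
            ∫⁻ z, ENNReal.ofReal (exp (t * φ (A n ω) z)) ∂ν ∂μ := by
          rw [← hlaw n, (hind.indepFun_of_measurable_past hZ hU).lintegral_comp_eq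
            (hU.mono (pastMeasurableSpace_le hZ n) le_rfl) (hZ n) hF]
          refine lintegral_congr fun ω => lintegral_const_mul _ ?_
          fun_prop
      _ ≤ ∫⁻ ω, ENNReal.ofReal (exp (t * S n ω)) * ENNReal.ofReal (exp (c * t ^ 2 / 2)) ∂μ :=
          lintegral_mono fun ω => by gcongr; exact (hsub n ω).lintegral_exp_mul_le t
      _ = (∫⁻ ω, ENNReal.ofReal (exp (t * S n ω)) ∂μ) * ENNReal.ofReal (exp (c * t ^ 2 / 2)) :=
          lintegral_mul_const _ ((hS n).const_mul t).exp.ennreal_ofReal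
      _ ≤ ENNReal.ofReal (exp (↑(n * c) * t ^ 2 / 2)) * ENNReal.ofReal (exp (c * t ^ 2 / 2)) :=
          by gcongr
      _ = ENNReal.ofReal (exp (↑((n + 1 : ℕ) * c) * t ^ 2 / 2)) := by
          rw [← ENNReal.ofReal_mul (exp_pos _).le, ← exp_add]
          push_cast
          ring_nf

end AzumaHoeffding

lemma ofReal_one_sub_le_measure {Ω : Type*} [MeasurableSpace Ω] {μ : Measure Ω}
    [IsProbabilityMeasure μ] {s : Set Ω} {δ : ℝ} (hδ : 0 ≤ δ) (h : μ sᶜ ≤ ENNReal.ofReal δ) :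
    ENNReal.ofReal (1 - δ) ≤ μ s := by
  rw [ENNReal.ofReal_sub _ hδ, ENNReal.ofReal_one, tsub_le_iff_right]
  calc 1 = μ Set.univ := measure_univ.symm
    _ ≤ μ s + μ sᶜ := measure_univ_le_add_compl s
    _ ≤ μ s + ENNReal.ofReal δ := by gcongr

lemma convexOn_integral {E Ξ : Type*} [AddCommMonoid E] [Module ℝ E] [MeasurableSpace Ξ]
    {P : Measure Ξ} {W : Set E} (hW : Convex ℝ W) {f : E → Ξ → ℝ}
    (hf : ∀ x, ConvexOn ℝ W fun v => f v x) (hint : ∀ v ∈ W, Integrable (f v) P) :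
    ConvexOn ℝ W fun v => ∫ x, f v x ∂P := by
  refine ⟨hW, fun u hu v hv a b ha hb hab => ?_⟩
  calc ∫ x, f (a • u + b • v) x ∂P ≤ ∫ x, (a * f u x + b * f v x) ∂P :=
        integral_mono (hint _ (hW hu hv ha hb hab))
          (((hint u hu).const_mul a).add ((hint v hv).const_mul b))
          fun x => (hf x).2 hu hv ha hb hab
    _ = a * ∫ x, f u x ∂P + b * ∫ x, f v x ∂P := by
        rw [integral_add ((hint u hu).const_mul a) ((hint v hv).const_mul b),
          integral_const_mul, integral_const_mul]

lemma ConvexOn.average_sub_le {E : Type*} [AddCommGroup E] [Module ℝ E] {W : Set E}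
    {R : E → ℝ} (hR : ConvexOn ℝ W R) {T : ℕ} (hT : 1 ≤ T) {w : ℕ → E}
    (hw : ∀ t, w t ∈ W) (u : E) {κ : ℝ} (hκ : 0 < κ) (a : ℕ → ℝ) {b : ℝ}
    (hb : ∑ t ∈ Finset.range T, (κ * (R (w t) - R u) - a t) ≤ κ * T * b) :
    R ((T : ℝ)⁻¹ • ∑ t ∈ Finset.range T, w t) - R u ≤
      (∑ t ∈ Finset.range T, a t) / (κ * T) + b := by
  have hT' : (0 : ℝ) < T := by positivity
  have hjensen : R ((T : ℝ)⁻¹ • ∑ t ∈ Finset.range T, w t) ≤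
      (T : ℝ)⁻¹ * ∑ t ∈ Finset.range T, R (w t) := by
    simpa [Finset.smul_sum, Finset.mul_sum] using
      hR.map_sum_le (t := Finset.range T) (w := fun _ => (T : ℝ)⁻¹) (fun _ _ => by positivity)
        (by simp [hT'.ne']) fun t _ => hw t
  rw [Finset.sum_sub_distrib, ← Finset.mul_sum, Finset.sum_sub_distrib, Finset.sum_const,
    Finset.card_range, nsmul_eq_mul] at hb
  rw [div_add' _ _ _ (by positivity), le_div_iff₀ (by positivity)]
  rw [le_inv_mul_iff₀ hT'] at hjensen
  nlinarith [mul_le_mul_of_nonneg_left hjensen hκ.le]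

section HuberMixture

variable {Ξ : Type*} [MeasurableSpace Ξ] {P Q : Measure Ξ} {ε : ℝ}

/-- The law of `(M, ξ)` with `M ∼ Bernoulli ε` and `ξ` drawn from `P` when `M = false`, from `Q`
when `M = true`. -/
noncomputable def huberMixture (ε : ℝ) (P Q : Measure Ξ) : Measure (Bool × Ξ) :=
  ENNReal.ofReal (1 - ε) • (Measure.dirac false).prod P
    + ENNReal.ofReal ε • (Measure.dirac true).prod Q

lemma huberMixture_eq_map (ε : ℝ) (P Q : Measure Ξ) [SFinite P] [SFinite Q] :
    huberMixture ε P Q = ENNReal.ofReal (1 - ε) • P.map (Prod.mk false)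
      + ENNReal.ofReal ε • Q.map (Prod.mk true) := by
  rw [huberMixture, Measure.dirac_prod, Measure.dirac_prod]

lemma isProbabilityMeasure_huberMixture [IsProbabilityMeasure P] [IsProbabilityMeasure Q]
    (hε0 : 0 ≤ ε) (hε1 : ε ≤ 1) : IsProbabilityMeasure (huberMixture ε P Q) := by
  constructor
  rw [huberMixture_eq_map, Measure.add_apply, Measure.smul_apply, Measure.smul_apply,
    Measure.map_apply measurable_prodMk_left MeasurableSet.univ,
    Measure.map_apply measurable_prodMk_left MeasurableSet.univ]
  simp only [Set.preimage_univ, measure_univ, smul_eq_mul, mul_one]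
  rw [← ENNReal.ofReal_add (by linarith) hε0, sub_add_cancel, ENNReal.ofReal_one]

lemma ae_huberMixture_inlier [SFinite P] [SFinite Q] {p : Ξ → Prop} (hp : ∀ᵐ x ∂P, p x) :
    ∀ᵐ z ∂huberMixture ε P Q, z.1 = false → p z.2 := by
  rw [huberMixture_eq_map, ae_add_measure_iff]
  exact ⟨Measure.ae_smul_measure ((measurableEmbedding_prodMk_left false).ae_map_iff.2
      (hp.mono fun x hx _ => hx)) _,
    Measure.ae_smul_measure ((measurableEmbedding_prodMk_left true).ae_map_iff.2
      (ae_of_all _ fun x h => by simp at h)) _⟩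

lemma integral_huberMixture_inlier [SFinite P] [SFinite Q] (hε1 : ε ≤ 1) {h : Ξ → ℝ}
    (hh : Integrable h P) :
    ∫ z, (if z.1 = false then h z.2 else 0) ∂huberMixture ε P Q = (1 - ε) * ∫ x, h x ∂P := by
  have hinl := measurableEmbedding_prodMk_left (β := Ξ) false
  have hout := measurableEmbedding_prodMk_left (β := Ξ) true
  have hint_inl : Integrable (fun z : Bool × Ξ => if z.1 = false then h z.2 else 0)
      (P.map (Prod.mk false)) := by
    rw [hinl.integrable_map_iff]; simpa [Function.comp_def] using hh
  have hint_out : Integrable (fun z : Bool × Ξ => if z.1 = false then h z.2 else 0)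
      (Q.map (Prod.mk true)) := by
    rw [hout.integrable_map_iff]; simp [Function.comp_def]
  rw [huberMixture_eq_map, integral_add_measure (hint_inl.smul_measure ENNReal.ofReal_ne_top)
    (hint_out.smul_measure ENNReal.ofReal_ne_top), integral_smul_measure, integral_smul_measure,
    hinl.integral_map, hout.integral_map, ENNReal.toReal_ofReal (by linarith)]
  simp

/-- Minus the inlier loss `h v` on a draw `z`, centred under `huberMixture ε P Q`. -/
noncomputable def inlierIncrement {V : Type*} (ε : ℝ) (P : Measure Ξ) (h : V → Ξ → ℝ) (v : V)
    (z : Bool × Ξ) : ℝ :=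
  (1 - ε) * ∫ x, h v x ∂P - if z.1 = false then h v z.2 else 0

lemma measurable_inlierIncrement {V : Type*} [MeasurableSpace V] [SFinite P] {h : V → Ξ → ℝ}
    (hh : Measurable (Function.uncurry h)) :
    Measurable (Function.uncurry (inlierIncrement ε P h)) :=
  ((hh.stronglyMeasurable.integral_prod_right' (ν := P)).measurable.comp measurable_fst
    |>.const_mul _).sub <| Measurable.ite
      (measurableSet_eq_fun (measurable_fst.comp measurable_snd) measurable_const)
      (hh.comp (measurable_fst.prodMk (measurable_snd.comp measurable_snd))) measurable_const

lemma hasSubgaussianMGF_inlierIncrement [IsProbabilityMeasure P] [IsProbabilityMeasure Q]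
    (hε0 : 0 ≤ ε) (hε1 : ε ≤ 1) {V : Type*} {h : V → Ξ → ℝ} {v : V} (hm : Measurable (h v))
    {B : ℝ} (hB : ∀ᵐ x ∂P, |h v x| ≤ B) :
    HasSubgaussianMGF (inlierIncrement ε P h v) (‖B‖₊ ^ 2) (huberMixture ε P Q) := by
  have := isProbabilityMeasure_huberMixture (P := P) (Q := Q) hε0 hε1
  have hB0 : 0 ≤ B := (abs_nonneg _).trans hB.exists.choose_spec
  set Y : Bool × Ξ → ℝ := fun z => if z.1 = false then h v z.2 else 0
  have hY : Measurable Y := Measurable.ite (measurableSet_eq_fun measurable_fst measurable_const)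
    (hm.comp measurable_snd) measurable_const
  have hYB : ∀ᵐ z ∂huberMixture ε P Q, Y z ∈ Set.Icc (-B) B := by
    filter_upwards [ae_huberMixture_inlier (Q := Q) (ε := ε) hB] with z hz
    by_cases hz1 : z.1 = false
    · simpa [Y, hz1] using abs_le.1 (hz hz1)
    · simp [Y, hz1, hB0]
  have hmean : ∫ z, Y z ∂huberMixture ε P Q = (1 - ε) * ∫ x, h v x ∂P :=
    integral_huberMixture_inlier hε1
      (Integrable.of_bound hm.aestronglyMeasurable B (by simpa using hB))
  convert (hasSubgaussianMGF_of_mem_Icc hY.aemeasurable hYB).neg using 1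
  · ext z
    simp [inlierIncrement, Y, hmean]
  · ext
    simp [abs_of_nonneg (add_nonneg hB0 hB0)]

end HuberMixture

/-- The Azuma radius `B √(2 T L)` is half of the deviation term `2B √(2 T L)` of the bound. -/
lemma sqrt_two_mul_mul_sq_mul_le {T : ℕ} (hT : 1 ≤ T) {B L κ : ℝ} (hB : 0 ≤ B) (hκ : 0 < κ) :
    √(2 * ↑(T * ‖B‖₊ ^ 2) * L) ≤ κ * T * (2 * B / κ * √(2 / T * L)) := by
  have hT0 : (0 : ℝ) < T := by positivity
  have hsqrt : √(2 * T * L) = T * √(2 / T * L) := by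
    rw [show 2 * T * L = (T : ℝ) ^ 2 * (2 / T * L) by field_simp, Real.sqrt_mul (by positivity),
      Real.sqrt_sq hT0.le]
  calc √(2 * ↑(T * ‖B‖₊ ^ 2) * L) = B * √(2 * T * L) := by
        rw [show 2 * ↑(T * ‖B‖₊ ^ 2) * L = B ^ 2 * (2 * T * L) by push_cast; simp; ring,
          Real.sqrt_mul (sq_nonneg B), Real.sqrt_sq hB]
    _ ≤ 2 * B * √(2 * T * L) := by nlinarith [Real.sqrt_nonneg (2 * T * L)]
    _ = κ * T * (2 * B / κ * √(2 / T * L)) := by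
        rw [hsqrt]
        field_simp

theorem huber_contamination_online_to_batch_high_prob_general
    {d : ℕ} (W : Set (EuclideanSpace ℝ (Fin d)))
    (hWconv : Convex ℝ W)
    {Ξ : Type*} [MeasurableSpace Ξ]
    (P Q : Measure Ξ) [IsProbabilityMeasure P] [IsProbabilityMeasure Q]
    (ε : ℝ) (hε0 : 0 ≤ ε) (hε1 : ε < 1)
    {Ω : Type*} [MeasurableSpace Ω] (μ : Measure Ω) [IsProbabilityMeasure μ]
    (M : ℕ → Ω → Bool) (ξ : ℕ → Ω → Ξ)
    (hmeas : ∀ t, Measurable fun ω => (M t ω, ξ t ω))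
    (hiid : iIndepFun (fun t ω => (M t ω, ξ t ω)) μ)
    (hlaw : ∀ t, Measure.map (fun ω => (M t ω, ξ t ω)) μ =
      ENNReal.ofReal (1 - ε) • (Measure.dirac false).prod P
        + ENNReal.ofReal ε • (Measure.dirac true).prod Q)
    (f : EuclideanSpace ℝ (Fin d) → Ξ → ℝ)
    (hfmeas : Measurable (Function.uncurry f))
    (hfconv : ∀ ξ', ConvexOn ℝ W fun v => f v ξ')
    (hfintP : ∀ v ∈ W, Integrable (f v) P)
    (T : ℕ) (hT : 1 ≤ T)
    (w : ℕ → Ω → EuclideanSpace ℝ (Fin d))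
    (hwW : ∀ t ω, w t ω ∈ W)
    (hwmeas : ∀ t, Measurable[MeasurableSpace.comap
      (fun ω (s : Fin t) => ξ s ω) inferInstance] (w t))
    (uP : EuclideanSpace ℝ (Fin d)) (huP : uP ∈ W)
    (B : ℝ) (hB : ∀ᵐ x ∂P, ∀ v ∈ W, |f v x - f uP x| ≤ B)
    (δ : ℝ) (hδ0 : 0 < δ) (hδ1 : δ ≤ 1) :
    ENNReal.ofReal (1 - δ) ≤
      μ {ω | (∫ x, f ((T : ℝ)⁻¹ • ∑ t ∈ Finset.range T, w t ω) x ∂P) - ∫ x, f uP x ∂P ≤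
        (∑ t ∈ Finset.range T,
            (if M t ω = false then f (w t ω) (ξ t ω) - f uP (ξ t ω) else 0))
          / ((1 - ε) * T)
        + 2 * B / (1 - ε) * Real.sqrt (2 / T * Real.log (1 / δ))} := by
  set Z : ℕ → Ω → Bool × Ξ := fun t ω => (M t ω, ξ t ω)
  set L := Real.log (1 / δ)
  have hL : 0 ≤ L := Real.log_nonneg (one_le_one_div hδ0 hδ1)
  have hB0 : 0 ≤ B := by
    obtain ⟨x, hx⟩ := hB.exists
    simpa using hx uP huP
  set h := fun v x => f v x - f uP x
  have hh : Measurable (Function.uncurry h) :=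
    hfmeas.sub (hfmeas.comp (measurable_const.prodMk measurable_snd))
  have hS := hasSubgaussianMGF_sum_predictable hmeas hiid hlaw
    (fun t => (hwmeas t).mono (comap_comp_le_pastMeasurableSpace (Z := Z) measurable_snd t) le_rfl)
    (measurable_inlierIncrement hh) (fun t ω => hasSubgaussianMGF_inlierIncrement (Q := Q) hε0
      hε1.le (hh.comp measurable_prodMk_left) (hB.mono fun x hx => hx _ (hwW t ω))) T
  have htail := hS.measure_lt_le hL (sqrt_two_mul_mul_sq_mul_le hT hB0 (sub_pos.2 hε1))
  rw [Real.exp_neg, Real.exp_log (by positivity), one_div, inv_inv] at htail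
  refine ofReal_one_sub_le_measure hδ0.le ((measure_mono fun ω hω => ?_).trans htail)
  by_contra hle
  refine hω ((convexOn_integral hWconv hfconv hfintP).average_sub_le hT (fun t => hwW t ω) uP
    (sub_pos.2 hε1) _ ((Finset.sum_congr rfl fun t _ => ?_).trans_le (not_lt.1 hle)))
  simp only [inlierIncrement, h, integral_sub (hfintP _ (hwW t ω)) (hfintP uP huP)]

/-- Lemma 1, Huber ε-contamination, high-probability bound.
Setting as in Statement 6, with the additional assumption that
`|f(w,ξ) - f(u_P,ξ)| ≤ B` for all `w ∈ W`, for `P`-almost every `ξ`.  Then with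
`P_ε`-probability at least `1-δ` the `P`-excess-risk of the average iterate is bounded by
the robust regret over the inlier rounds divided by `(1-ε)T`, plus
`(2B/(1-ε))·√((2/T)·ln(1/δ))`. -/
theorem huber_contamination_online_to_batch_high_prob
    {d : ℕ} (W : Set (EuclideanSpace ℝ (Fin d)))
    (hWne : W.Nonempty) (hWcomp : IsCompact W) (hWconv : Convex ℝ W)
    {Ξ : Type*} [MeasurableSpace Ξ]
    (P Q : Measure Ξ) [IsProbabilityMeasure P] [IsProbabilityMeasure Q]
    (ε : ℝ) (hε0 : 0 ≤ ε) (hε1 : ε < 1)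
    {Ω : Type*} [MeasurableSpace Ω] (μ : Measure Ω) [IsProbabilityMeasure μ]
    (M : ℕ → Ω → Bool) (ξ : ℕ → Ω → Ξ)
    (hmeas : ∀ t, Measurable fun ω => (M t ω, ξ t ω))
    (hiid : iIndepFun (fun t ω => (M t ω, ξ t ω)) μ)
    (hlaw : ∀ t, Measure.map (fun ω => (M t ω, ξ t ω)) μ =
      ENNReal.ofReal (1 - ε) • (Measure.dirac false).prod P
        + ENNReal.ofReal ε • (Measure.dirac true).prod Q)
    (f : EuclideanSpace ℝ (Fin d) → Ξ → ℝ)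
    (hfmeas : Measurable (Function.uncurry f))
    (hfconv : ∀ ξ', ConvexOn ℝ W fun v => f v ξ')
    (hfintP : ∀ v ∈ W, Integrable (f v) P)
    (hfintQ : ∀ v ∈ W, Integrable (f v) Q)
    (T : ℕ) (hT : 1 ≤ T)
    (w : ℕ → Ω → EuclideanSpace ℝ (Fin d))
    (hwW : ∀ t ω, w t ω ∈ W)
    (hwmeas : ∀ t, Measurable[MeasurableSpace.comap
      (fun ω (s : Fin t) => ξ s ω) inferInstance] (w t))
    (uP : EuclideanSpace ℝ (Fin d)) (huP : uP ∈ W)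
    (huPopt : ∀ v ∈ W, ∫ x, f uP x ∂P ≤ ∫ x, f v x ∂P)
    (B : ℝ) (hB : ∀ᵐ x ∂P, ∀ v ∈ W, |f v x - f uP x| ≤ B)
    (δ : ℝ) (hδ0 : 0 < δ) (hδ1 : δ ≤ 1) :
    ENNReal.ofReal (1 - δ) ≤
      μ {ω | (∫ x, f ((T : ℝ)⁻¹ • ∑ t ∈ Finset.range T, w t ω) x ∂P) - ∫ x, f uP x ∂P ≤
        (∑ t ∈ Finset.range T,
            (if M t ω = false then f (w t ω) (ξ t ω) - f uP (ξ t ω) else 0))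
          / ((1 - ε) * T)
        + 2 * B / (1 - ε) * Real.sqrt (2 / T * Real.log (1 / δ))} :=
  huber_contamination_online_to_batch_high_prob_general W hWconv P Q ε hε0 hε1 μ M ξ hmeas hiid hlaw
    f hfmeas hfconv hfintP T hT w hwW hwmeas uP huP B hB δ hδ0 hδ1
end

section
/- Lower bound with i.i.d. losses: let W > 0, G > 0, and integers 1 ≤ k ≤ T. Let ξ_1,…,ξ_T be i.i.d. Rademacher random variables (uniform on {−1,+1}), and for each t let w_t : {−1,+1}^{t−1} → [−W, W] be an arbitrary measurable function (the learner's predictions, with w_t evaluated at (ξ_1,…,ξ_{t−1})). For ζ ∈ {−1,+1} define u_ζ = −W·ζ and the random set S_ζ = {t ∈ [k] : ξ_t = ζ} ∪ {k+1,…,T}, which always satisfies T − |S_ζ| ≤ k. Then the average over ζ ∈ {−1,+1} of E[Σ_{t∈S_ζ} G·ξ_t·(w_t − u_ζ)] equals G·W·k/2; in particular there exists ζ ∈ {−1,+1} such that E[Σ_{t∈S_ζ} G·ξ_t·(w_t − u_ζ)] ≥ G·W·k/2 = D·G·k/4, where D = 2W is the diameter of the domain [−W, W]. Moreover the losses f_t(w)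 = G·ξ_t·w have |∇f_t| = G on all rounds, so G(S_ζ) = G. -/
/-!
Round `t < k` lies in exactly one of the two inlier sets, namely `S_{ξ_t}`, where it costs
`G ξ_t (w_t + W ξ_t) = G W + G ξ_t w_t`; every later round lies in both and costs
`G ξ_t (w_t + W) + G ξ_t (w_t - W) = 2 G ξ_t w_t`. So the two regrets add up to
`G W k` plus a combination of the terms `ξ_t w_t`. Since `w_t` is a function of the past
signs `ξ_s`, `s < t`, it is independent of `ξ_t`, and `E[ξ_t] = 0` gives `E[ξ_t w_t] = 0`.
-/

open MeasureTheory ProbabilityTheory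

/-- The random inlier set `S_ζ = {t ∈ [k] : ξ_t = ζ} ∪ {k+1,…,T}` (0-indexed as
`{t < k : ξ t = ζ} ∪ {k,…,T-1}`). -/
noncomputable def radInlierSet {Ω : Type*} (k T : ℕ) (ξ : ℕ → Ω → ℝ) (ζ : ℝ) (ω : Ω) :
    Finset ℕ :=
  ((Finset.range k).filter fun t => ξ t ω = ζ) ∪ Finset.Ico k T

open Finset

lemma MeasurableSpace.comap_prefix_le_iSup_comap {Ω β : Type*} [MeasurableSpace β]
    (ξ : ℕ → Ω → β) (t : ℕ) :
    MeasurableSpace.comap (fun ω (s : Fin t) => ξ s ω) inferInstance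
      ≤ ⨆ s ∈ Set.Iio t, MeasurableSpace.comap (ξ s) inferInstance := by
  simp_rw [MeasurableSpace.pi, MeasurableSpace.comap_iSup, MeasurableSpace.comap_comp,
    Function.comp_def]
  exact iSup_le fun s => le_iSup₂
    (f := fun s (_ : s ∈ Set.Iio t) => MeasurableSpace.comap (ξ s) inferInstance) (s : ℕ) s.2

lemma MeasurableSpace.comap_prefix_le {Ω β : Type*} [MeasurableSpace Ω] [MeasurableSpace β]
    {ξ : ℕ → Ω → β} (hξ : ∀ t, Measurable (ξ t)) (t : ℕ) :
    MeasurableSpace.comap (fun ω (s : Fin t) => ξ s ω) inferInstance ≤ ‹MeasurableSpace Ω› :=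
  (measurable_pi_lambda (fun ω (s : Fin t) => ξ s ω) fun s => hξ s).comap_le

namespace ProbabilityTheory

variable {Ω β : Type*} [MeasurableSpace Ω] [MeasurableSpace β] {μ : Measure Ω}

lemma iIndepFun.indepFun_of_measurable_comap_prefix {γ : Type*} [MeasurableSpace γ]
    {ξ : ℕ → Ω → β} (hξ : ∀ t, Measurable (ξ t)) (hind : iIndepFun ξ μ) {t : ℕ} {v : Ω → γ}
    (hv : Measurable[MeasurableSpace.comap (fun ω (s : Fin t) => ξ s ω) inferInstance] v) :
    IndepFun (ξ t) v μ := by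
  have h := indep_iSup_of_disjoint (fun s => (hξ s).comap_le) hind.iIndep
    (S := {t}) (T := Set.Iio t) (by simp)
  rw [_root_.iSup_singleton] at h
  exact (IndepFun_iff_Indep _ _ _).2 (indep_of_indep_of_le_right h
    (hv.comap_le.trans (MeasurableSpace.comap_prefix_le_iSup_comap ξ t)))

noncomputable def rademacher : Measure ℝ :=
  (2 : ENNReal)⁻¹ • Measure.dirac (-1) + (2 : ENNReal)⁻¹ • Measure.dirac 1

lemma integral_id_rademacher : ∫ x, x ∂rademacher = 0 := by
  have hid : ∀ a : ℝ, Integrable (fun x : ℝ => x) ((2 : ENNReal)⁻¹ • Measure.dirac a) :=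
    fun a => (integrable_dirac (by simp)).smul_measure (by simp)
  rw [rademacher, integral_add_measure (hid _) (hid _), integral_smul_measure,
    integral_smul_measure, integral_dirac, integral_dirac]
  norm_num

lemma integral_eq_zero_of_map_eq_rademacher {X : Ω → ℝ} (hX : Measurable X)
    (hlaw : μ.map X = rademacher) : ∫ ω, X ω ∂μ = 0 := by
  rw [← integral_id_rademacher, ← hlaw]
  exact (integral_map hX.aemeasurable aestronglyMeasurable_id).symm

lemma integral_mul_eq_zero_of_measurable_comap_prefix {ξ : ℕ → Ω → ℝ}
    (hξ : ∀ t, Measurable (ξ t)) (hind : iIndepFun ξ μ) {t : ℕ} (hmean : ∫ ω, ξ t ω ∂μ = 0)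
    {v : Ω → ℝ}
    (hv : Measurable[MeasurableSpace.comap (fun ω (s : Fin t) => ξ s ω) inferInstance] v) :
    ∫ ω, ξ t ω * v ω ∂μ = 0 := by
  have hvm : Measurable v := hv.mono (MeasurableSpace.comap_prefix_le hξ t) le_rfl
  rw [← Pi.mul_def, (hind.indepFun_of_measurable_comap_prefix hξ hv).integral_mul_eq_mul_integral
    (hξ t).aestronglyMeasurable hvm.aestronglyMeasurable, hmean, zero_mul]

end ProbabilityTheory

section radInlierSet

variable {Ω : Type*} (k T : ℕ) (ξ : ℕ → Ω → ℝ)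

lemma sub_card_radInlierSet_le (ζ : ℝ) (ω : Ω) : T - (radInlierSet k T ξ ζ ω).card ≤ k := by
  have h : (Ico k T).card ≤ (radInlierSet k T ξ ζ ω).card := card_le_card subset_union_right
  rw [Nat.card_Ico] at h
  omega

lemma sum_radInlierSet {M : Type*} [AddCommMonoid M] (f : ℕ → M) (ζ : ℝ) (ω : Ω) :
    ∑ t ∈ radInlierSet k T ξ ζ ω, f t
      = ∑ t ∈ range k, (if ξ t ω = ζ then f t else 0) + ∑ t ∈ Ico k T, f t := by
  rw [radInlierSet, sum_union, sum_filter]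
  exact disjoint_left.2 fun t ht ht' => by
    simp only [mem_filter, mem_range, mem_Ico] at ht ht'
    omega

lemma integrable_sum_radInlierSet [MeasurableSpace Ω] {μ : Measure Ω}
    (hξ : ∀ t, Measurable (ξ t)) {f : ℕ → Ω → ℝ} (hf : ∀ t, Integrable (f t) μ) (ζ : ℝ) :
    Integrable (fun ω => ∑ t ∈ radInlierSet k T ξ ζ ω, f t ω) μ := by
  simp_rw [sum_radInlierSet]
  refine (integrable_finsetSum _ fun t _ => ?_).add (integrable_finsetSum _ fun t _ => hf t)
  have hind : (fun ω => if ξ t ω = ζ then f t ω else 0) = {ω | ξ t ω = ζ}.indicator (f t) := by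
    ext ω
    simp [Set.indicator_apply]
  rw [hind]
  exact (hf t).indicator (hξ t (measurableSet_singleton ζ))

lemma sum_regret_one_add_sum_regret_neg_one (w : ℕ → Ω → ℝ) (G W : ℝ) {ω : Ω}
    (hξ : ∀ t, ξ t ω = -1 ∨ ξ t ω = 1) :
    ∑ t ∈ radInlierSet k T ξ 1 ω, G * ξ t ω * (w t ω - (-W * 1))
      + ∑ t ∈ radInlierSet k T ξ (-1) ω, G * ξ t ω * (w t ω - (-W * (-1)))
      = G * W * k
        + G * (∑ t ∈ range k, ξ t ω * w t ω + 2 * ∑ t ∈ Ico k T, ξ t ω * w t ω) := by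
  have hearly : ∀ t ∈ range k,
      ((if ξ t ω = 1 then G * ξ t ω * (w t ω - (-W * 1)) else 0)
        + if ξ t ω = -1 then G * ξ t ω * (w t ω - (-W * (-1))) else 0)
      = G * W + G * (ξ t ω * w t ω) := by
    intro t _
    rcases hξ t with h | h <;> norm_num [h] <;> ring
  rw [sum_radInlierSet, sum_radInlierSet, add_add_add_comm, ← sum_add_distrib,
    sum_congr rfl hearly, ← sum_add_distrib, sum_add_distrib, sum_const, card_range,
    nsmul_eq_mul, mul_add, mul_sum, mul_sum, mul_sum, add_assoc]
  congr 1
  · ring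
  · congr 1
    exact sum_congr rfl fun t _ => by ring

lemma integral_regret_one_add_integral_regret_neg_one [MeasurableSpace Ω] {μ : Measure Ω}
    [IsProbabilityMeasure μ] (w : ℕ → Ω → ℝ) (G W : ℝ) (hξ : ∀ t ω, ξ t ω = -1 ∨ ξ t ω = 1)
    (hξm : ∀ t, Measurable (ξ t)) (hw : ∀ t, Integrable (w t) μ)
    (hcentered : ∀ t, ∫ ω, ξ t ω * w t ω ∂μ = 0) :
    ∫ ω, ∑ t ∈ radInlierSet k T ξ 1 ω, G * ξ t ω * (w t ω - (-W * 1)) ∂μ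
      + ∫ ω, ∑ t ∈ radInlierSet k T ξ (-1) ω, G * ξ t ω * (w t ω - (-W * (-1))) ∂μ
      = G * W * k := by
  have hξabs : ∀ t ω, |ξ t ω| = 1 := fun t ω => by rcases hξ t ω with h | h <;> simp [h]
  have hregret : ∀ ζ, Integrable
      (fun ω => ∑ t ∈ radInlierSet k T ξ ζ ω, G * ξ t ω * (w t ω - (-W * ζ))) μ := fun ζ =>
    integrable_sum_radInlierSet k T ξ hξm (fun t => ((hw t).sub (integrable_const _)).bdd_mul
      ((hξm t).const_mul G).aestronglyMeasurable
      (ae_of_all _ fun ω => (by simp [hξabs] : ‖G * ξ t ω‖ ≤ |G|))) ζ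
  have hξw : ∀ t, Integrable (fun ω => ξ t ω * w t ω) μ := fun t =>
    (hw t).bdd_mul (hξm t).aestronglyMeasurable
      (ae_of_all _ fun ω => (by simp [hξabs] : ‖ξ t ω‖ ≤ 1))
  have hsum : ∀ s : Finset ℕ, Integrable (fun ω => ∑ t ∈ s, ξ t ω * w t ω) μ := fun s =>
    integrable_finsetSum s fun t _ => hξw t
  have hsum_zero : ∀ s : Finset ℕ, ∫ ω, ∑ t ∈ s, ξ t ω * w t ω ∂μ = 0 := fun s => by
    rw [integral_finsetSum s fun t _ => hξw t]
    exact sum_eq_zero fun t _ => hcentered t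
  have hcomb : Integrable (fun ω => ∑ t ∈ range k, ξ t ω * w t ω
      + 2 * ∑ t ∈ Ico k T, ξ t ω * w t ω) μ := (hsum _).add ((hsum _).const_mul 2)
  rw [← integral_add (hregret 1) (hregret (-1)), integral_congr_ae (ae_of_all _ fun ω =>
      sum_regret_one_add_sum_regret_neg_one k T ξ w G W (hξ · ω)),
    integral_add (integrable_const _) (hcomb.const_mul G), integral_const, integral_const_mul,
    integral_add (hsum _) ((hsum _).const_mul 2), integral_const_mul, hsum_zero, hsum_zero]
  simp

end radInlierSet

theorem lower_bound_iid_losses_general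
    {Ω : Type*} [MeasurableSpace Ω] (μ : Measure Ω) [IsProbabilityMeasure μ]
    (W G : ℝ) (hG : 0 < G)
    (T k : ℕ)
    (ξ : ℕ → Ω → ℝ) (hξmeas : ∀ t, Measurable (ξ t))
    (hξval : ∀ t ω, ξ t ω ∈ ({-1, 1} : Set ℝ))
    (hiid : iIndepFun ξ μ)
    (hlaw : ∀ t, Measure.map (ξ t) μ =
      (2 : ENNReal)⁻¹ • Measure.dirac (-1) + (2 : ENNReal)⁻¹ • Measure.dirac 1)
    (w : ℕ → Ω → ℝ) (hwdom : ∀ t ω, w t ω ∈ Set.Icc (-W) W)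
    (hwmeas : ∀ t, Measurable[MeasurableSpace.comap
      (fun ω (s : Fin t) => ξ s ω) inferInstance] (w t)) :
    (∀ ζ : ℝ, ∀ ω : Ω, T - (radInlierSet k T ξ ζ ω).card ≤ k) ∧
    (∫ ω, ∑ t ∈ radInlierSet k T ξ 1 ω, G * ξ t ω * (w t ω - (-W * 1)) ∂μ
      + ∫ ω, ∑ t ∈ radInlierSet k T ξ (-1) ω, G * ξ t ω * (w t ω - (-W * (-1))) ∂μ) / 2
      = G * W * k / 2 ∧
    (∃ ζ ∈ ({-1, 1} : Set ℝ),
      G * W * k / 2 ≤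
        ∫ ω, ∑ t ∈ radInlierSet k T ξ ζ ω, G * ξ t ω * (w t ω - (-W * ζ)) ∂μ) ∧
    G * W * k / 2 = 2 * W * G * k / 4 ∧
    (∀ t < T, ∀ ω, |G * ξ t ω| = G) := by
  have hξ : ∀ t ω, ξ t ω = -1 ∨ ξ t ω = 1 := by simpa using hξval
  have htotal := integral_regret_one_add_integral_regret_neg_one k T ξ w G W hξ hξmeas
    (fun t => .of_mem_Icc (-W) W
      ((hwmeas t).mono (MeasurableSpace.comap_prefix_le hξmeas t) le_rfl).aemeasurable
      (ae_of_all _ (hwdom t)))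
    (fun t => integral_mul_eq_zero_of_measurable_comap_prefix hξmeas hiid
      (integral_eq_zero_of_map_eq_rademacher (hξmeas t) (hlaw t)) (hwmeas t))
  refine ⟨sub_card_radInlierSet_le k T ξ, by rw [htotal], ?_, by ring, fun t _ ω => ?_⟩
  · rcases le_total
      (∫ ω, ∑ t ∈ radInlierSet k T ξ 1 ω, G * ξ t ω * (w t ω - (-W * 1)) ∂μ)
      (∫ ω, ∑ t ∈ radInlierSet k T ξ (-1) ω, G * ξ t ω * (w t ω - (-W * (-1))) ∂μ) with h | h
    · exact ⟨-1, by simp, by linarith⟩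
    · exact ⟨1, by simp, by linarith⟩
  · rcases hξ t ω with h | h <;> simp [h, abs_of_pos hG]

/-- Theorem 2, lower bound with i.i.d. losses.  The losses are
`f_t(w) = G ξ_t w` on the domain `[-W, W]`, with `ξ_t` i.i.d. Rademacher, so the robust
regret on `S_ζ` against `u_ζ = -W ζ` is `∑_{t ∈ S_ζ} G ξ_t (w_t - u_ζ)`.  The set `S_ζ`
always leaves out at most `k` rounds; the average over `ζ ∈ {-1,1}` of the expected
robust regret equals `G W k / 2`, hence for some `ζ` the expected robust regret is at
least `G W k / 2 = D G k / 4` with `D = 2W`; and every gradient satisfies `|G ξ_t| = G`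
(so that `G(S_ζ) = G`). -/
theorem lower_bound_iid_losses
    {Ω : Type*} [MeasurableSpace Ω] (μ : Measure Ω) [IsProbabilityMeasure μ]
    (W G : ℝ) (hW : 0 < W) (hG : 0 < G)
    (T k : ℕ) (hk : 1 ≤ k) (hkT : k ≤ T)
    (ξ : ℕ → Ω → ℝ) (hξmeas : ∀ t, Measurable (ξ t))
    (hξval : ∀ t ω, ξ t ω ∈ ({-1, 1} : Set ℝ))
    (hiid : iIndepFun ξ μ)
    (hlaw : ∀ t, Measure.map (ξ t) μ =
      (2 : ENNReal)⁻¹ • Measure.dirac (-1) + (2 : ENNReal)⁻¹ • Measure.dirac 1)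
    (w : ℕ → Ω → ℝ) (hwdom : ∀ t ω, w t ω ∈ Set.Icc (-W) W)
    (hwmeas : ∀ t, Measurable[MeasurableSpace.comap
      (fun ω (s : Fin t) => ξ s ω) inferInstance] (w t)) :
    (∀ ζ : ℝ, ∀ ω : Ω, T - (radInlierSet k T ξ ζ ω).card ≤ k) ∧
    (∫ ω, ∑ t ∈ radInlierSet k T ξ 1 ω, G * ξ t ω * (w t ω - (-W * 1)) ∂μ
      + ∫ ω, ∑ t ∈ radInlierSet k T ξ (-1) ω, G * ξ t ω * (w t ω - (-W * (-1))) ∂μ) / 2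
      = G * W * k / 2 ∧
    (∃ ζ ∈ ({-1, 1} : Set ℝ),
      G * W * k / 2 ≤
        ∫ ω, ∑ t ∈ radInlierSet k T ξ ζ ω, G * ξ t ω * (w t ω - (-W * ζ)) ∂μ) ∧
    G * W * k / 2 = 2 * W * G * k / 4 ∧
    (∀ t < T, ∀ ω, |G * ξ t ω| = G) :=
  lower_bound_iid_losses_general μ W G hG T k ξ hξmeas hξval hiid hlaw w hwdom hwmeas
end

section
/- Lower bound for strongly convex losses: let W > 0, σ > 0, and integers 1 ≤ k ≤ T. Let ξ_1,…,ξ_k and ζ be i.i.d. Rademacher random variables. Define losses f_t(w) = (σ/2)·(w − W·ξ_t)² for t ≤ k and f_t(w) = (σ/2)·(w − W·ζ)² for t > k, all defined on [−W, W] and σ-strongly convex. Let the learner's prediction w_t take values in [−W, W], with w_t a measurable function of (ξ_1,…,ξ_{t−1}) for t ≤ k and of (ξ_1,…,ξ_k, ζ) for t > k. Let u = W·ζ and S = {t ∈ [k] : ξ_t = ζ} ∪ {k+1,…,T}, which always satisfies T − |S| ≤ k. Then E[Σ_{t∈S} (f_t(w_t) − f_t(u))] ≥ σ·W²·k/4;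 moreover |f_t'(w)| ≤ 2σW for every w ∈ [−W, W], so G(S) ≤ 2σW and the expected robust regret is at least G(S)²·k/(16σ) whenever G(S) = 2σW. -/
/-!
On a round `t ≤ k` the comparator `u = W ζ` suffers no loss exactly when `t ∈ S`, i.e. `ξ_t = ζ`,
so the round contributes `(σ/2) 1{ξ_t = ζ} (w_t - W ξ_t)²` to the robust regret. Since `w_t` only
sees `ξ_1, …, ξ_{t-1}`, it is independent of the pair `(ξ_t, ζ)`, which takes each of the values
`(1, 1)` and `(-1, -1)` with probability `1/4`. Hence the contribution has expectation
`(σ/8) (E (w_t - W)² + E (w_t + W)²) = (σ/4) (E w_t² + W²) ≥ σ W² / 4`, whatever the learner does.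
The rounds after `k` contribute nonnegative terms.
-/

open MeasureTheory ProbabilityTheory

/-- The random inlier set `S = {t ∈ [k] : ξ_t = ζ} ∪ {k+1,…,T}` (0-indexed as
`{t < k : X t = X k} ∪ {k,…,T-1}`, taking `ξ_t = X t` for `t < k` and `ζ = X k`). -/
noncomputable def scInlierSet {Ω : Type*} (k T : ℕ) (X : ℕ → Ω → ℝ) (ω : Ω) : Finset ℕ :=
  ((Finset.range k).filter fun t => X t ω = X k ω) ∪ Finset.Ico k T

/-- The center of the squared loss in round `t`: `W ξ_t` for `t < k` (0-indexed) and
`W ζ` for `t ≥ k`, where `ξ_t = X t` and `ζ = X k`. -/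
noncomputable def scCenter {Ω : Type*} (k : ℕ) (X : ℕ → Ω → ℝ) (Wr : ℝ) (t : ℕ) (ω : Ω) :
    ℝ :=
  if t < k then Wr * X t ω else Wr * X k ω

lemma abs_sub_mul_le_of_mem_Icc {W v x : ℝ} (hv : v ∈ Set.Icc (-W) W) (hx : x = -1 ∨ x = 1) :
    |v - W * x| ≤ 2 * W := by
  rw [abs_le]
  rcases hx with rfl | rfl <;> constructor <;> linarith [hv.1, hv.2]

lemma abs_sub_scCenter_le {Ω : Type*} {k t : ℕ} {X : ℕ → Ω → ℝ} {W v : ℝ} {ω : Ω}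
    (hX : ∀ s, X s ω = -1 ∨ X s ω = 1) (hv : v ∈ Set.Icc (-W) W) :
    |v - scCenter k X W t ω| ≤ 2 * W := by
  unfold scCenter
  split_ifs <;> exact abs_sub_mul_le_of_mem_Icc hv (hX _)

lemma sub_card_scInlierSet_le {Ω : Type*} (k T : ℕ) (X : ℕ → Ω → ℝ) (ω : Ω) :
    T - (scInlierSet k T X ω).card ≤ k := by
  have := Finset.card_le_card (Finset.subset_union_right (s₂ := Finset.Ico k T)
    (s₁ := (Finset.range k).filter fun t => X t ω = X k ω))
  rw [Nat.card_Ico] at this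
  rw [scInlierSet]
  omega

lemma sum_scInlierSet_regret_eq {Ω : Type*} (k T : ℕ) (X w : ℕ → Ω → ℝ) (W σ : ℝ) (ω : Ω) :
    ∑ t ∈ scInlierSet k T X ω,
        (σ / 2 * (w t ω - scCenter k X W t ω) ^ 2
          - σ / 2 * (W * X k ω - scCenter k X W t ω) ^ 2) =
      ∑ t ∈ Finset.range k, σ / 2 * (if X t ω = X k ω then (w t ω - W * X t ω) ^ 2 else 0) +
        ∑ t ∈ Finset.Ico k T, σ / 2 * (w t ω - W * X k ω) ^ 2 := by
  have hdisj : Disjoint ((Finset.range k).filter fun t => X t ω = X k ω) (Finset.Ico k T) :=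
    Finset.disjoint_left.mpr fun t h₁ h₂ => by
      simp only [Finset.mem_filter, Finset.mem_range, Finset.mem_Ico] at h₁ h₂
      omega
  rw [scInlierSet, Finset.sum_union hdisj, Finset.sum_filter]
  congr 1 <;> refine Finset.sum_congr rfl fun t ht => ?_
  · rw [Finset.mem_range] at ht
    split_ifs with h <;> simp [scCenter, ht, h]
  · rw [Finset.mem_Ico] at ht
    simp [scCenter, Nat.not_lt.mpr ht.1]

noncomputable def rademacherMeasure : Measure ℝ :=
  (2 : ENNReal)⁻¹ • Measure.dirac (-1) + (2 : ENNReal)⁻¹ • Measure.dirac 1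

lemma rademacherMeasure_singleton {a : ℝ} (ha : a = -1 ∨ a = 1) :
    rademacherMeasure {a} = 2⁻¹ := by
  rcases ha with rfl | rfl <;> norm_num [rademacherMeasure]

section

variable {Ω : Type*} [MeasurableSpace Ω] {μ : Measure Ω}

lemma measure_preimage_eq_of_map_eq_rademacherMeasure {A : Ω → ℝ} (hA : Measurable A)
    (hlaw : μ.map A = rademacherMeasure) {a : ℝ} (ha : a = -1 ∨ a = 1) :
    μ (A ⁻¹' {a}) = 2⁻¹ := by
  rw [← Measure.map_apply hA (measurableSet_singleton a), hlaw, rademacherMeasure_singleton ha]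

lemma measureReal_preimage_diag_eq_of_rademacher {A B : Ω → ℝ} (hA : Measurable A)
    (hB : Measurable B) (hAB : IndepFun A B μ) (hlawA : μ.map A = rademacherMeasure)
    (hlawB : μ.map B = rademacherMeasure) {a : ℝ} (ha : a = -1 ∨ a = 1) :
    μ.real ((fun ω => (A ω, B ω)) ⁻¹' {(a, a)}) = 1 / 4 := by
  have hpre : (fun ω => (A ω, B ω)) ⁻¹' {(a, a)} = A ⁻¹' {a} ∩ B ⁻¹' {a} := by
    ext ω; simp
  rw [measureReal_def, hpre, hAB.measure_inter_preimage_eq_mul _ _ (measurableSet_singleton a)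
    (measurableSet_singleton a), measure_preimage_eq_of_map_eq_rademacherMeasure hA hlawA ha,
    measure_preimage_eq_of_map_eq_rademacherMeasure hB hlawB ha]
  norm_num [ENNReal.toReal_inv]

lemma ProbabilityTheory.IndepFun.integral_mul_indicator_comp {β : Type*} [MeasurableSpace β]
    {f : Ω → ℝ} {Y : Ω → β} (h : IndepFun f Y μ) (hf : AEStronglyMeasurable f μ) (hY : Measurable Y)
    {s : Set β} (hs : MeasurableSet s) :
    ∫ ω, f ω * s.indicator 1 (Y ω) ∂μ = (∫ ω, f ω ∂μ) * μ.real (Y ⁻¹' s) := by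
  have hind : Measurable (s.indicator (1 : β → ℝ)) := measurable_one.indicator hs
  calc ∫ ω, f ω * s.indicator 1 (Y ω) ∂μ = (∫ ω, f ω ∂μ) * ∫ ω, s.indicator 1 (Y ω) ∂μ :=
        (h.comp measurable_id hind).integral_fun_mul_eq_mul_integral hf
          (hind.comp hY).aestronglyMeasurable
    _ = (∫ ω, f ω ∂μ) * μ.real (Y ⁻¹' s) := by
        rw [← integral_indicator_one (hY hs)]
        rfl

lemma ProbabilityTheory.IndepFun.of_measurable_comap {β γ δ : Type*} [mβ : MeasurableSpace β]
    [MeasurableSpace γ] [MeasurableSpace δ] {Y : Ω → β} {Z : Ω → γ} (hYZ : IndepFun Y Z μ)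
    {f : Ω → δ}
    (hf : Measurable[mβ.comap Y] f) : IndepFun f Z μ := by
  rw [IndepFun_iff_Indep] at hYZ ⊢
  exact indep_of_indep_of_le_left hYZ hf.comap_le

lemma ProbabilityTheory.iIndepFun.indepFun_pi_fin_prodMk {β : Type*} [MeasurableSpace β]
    {X : ℕ → Ω → β} (hiid : iIndepFun X μ) (hX : ∀ t, Measurable (X t)) {t i j : ℕ}
    (hi : t ≤ i) (hj : t ≤ j) :
    IndepFun (fun ω (s : Fin t) => X s ω) (fun ω => (X i ω, X j ω)) μ := by
  have hdisj : Disjoint (Finset.range t) {i, j} := by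
    simp only [Finset.disjoint_left, Finset.mem_range, Finset.mem_insert, Finset.mem_singleton]
    omega
  have hi' : i ∈ ({i, j} : Finset ℕ) := by simp
  have hj' : j ∈ ({i, j} : Finset ℕ) := by simp
  exact (hiid.indepFun_finset _ _ hdisj hX).comp
    (φ := fun v (s : Fin t) => v ⟨s, Finset.mem_range.mpr s.2⟩)
    (ψ := fun v => (v ⟨i, hi'⟩, v ⟨j, hj'⟩))
    (by fun_prop) (by fun_prop)

lemma integral_ite_sq_sub_mul_eq_of_rademacher [IsProbabilityMeasure μ] {V A B : Ω → ℝ} (W : ℝ)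
    (hV : MemLp V 2 μ) (hA : Measurable A) (hB : Measurable B)
    (hAval : ∀ ω, A ω = -1 ∨ A ω = 1) (hAB : IndepFun A B μ)
    (hVAB : IndepFun V (fun ω => (A ω, B ω)) μ) (hlawA : μ.map A = rademacherMeasure)
    (hlawB : μ.map B = rademacherMeasure) :
    ∫ ω, (if A ω = B ω then (V ω - W * A ω) ^ 2 else 0) ∂μ = ((∫ ω, V ω ^ 2 ∂μ) + W ^ 2) / 2 := by
  set P := fun ω => (A ω, B ω)
  have hP : Measurable P := hA.prodMk hB
  have hsq : ∀ c, Integrable (fun ω => (V ω - c) ^ 2) μ := fun c =>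
    (hV.sub (memLp_const c)).integrable_sq
  have hind : ∀ a : ℝ, Measurable (({(a, a)} : Set (ℝ × ℝ)).indicator (1 : ℝ × ℝ → ℝ)) :=
    fun a => measurable_one.indicator (measurableSet_singleton _)
  have hdiag_int : ∀ a : ℝ, Integrable
      (fun ω => (V ω - W * a) ^ 2 * ({(a, a)} : Set (ℝ × ℝ)).indicator 1 (P ω)) μ := fun a =>
    (hsq _).mul_bdd (c := 1) ((hind a).comp hP).aestronglyMeasurable <| .of_forall fun ω => by
      by_cases h : P ω = (a, a) <;> simp [h]
  have hdiag : ∀ a : ℝ, a = -1 ∨ a = 1 →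
      ∫ ω, (V ω - W * a) ^ 2 * ({(a, a)} : Set (ℝ × ℝ)).indicator 1 (P ω) ∂μ =
        (∫ ω, (V ω - W * a) ^ 2 ∂μ) / 4 := fun a ha => by
    have hindep : IndepFun (fun ω => (V ω - W * a) ^ 2) P μ :=
      hVAB.comp (φ := fun v => (v - W * a) ^ 2) (by fun_prop) measurable_id
    rw [hindep.integral_mul_indicator_comp (hsq _).aestronglyMeasurable hP
      (measurableSet_singleton _),
      measureReal_preimage_diag_eq_of_rademacher hA hB hAB hlawA hlawB ha]
    ring
  have hdecomp : ∀ ω, (if A ω = B ω then (V ω - W * A ω) ^ 2 else 0) =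
      (V ω - W * 1) ^ 2 * ({(1, 1)} : Set (ℝ × ℝ)).indicator 1 (P ω) +
        (V ω - W * (-1)) ^ 2 * ({(-1, -1)} : Set (ℝ × ℝ)).indicator 1 (P ω) := fun ω => by
    by_cases hAB' : A ω = B ω
    · simp only [P, ← hAB']
      rcases hAval ω with h | h <;> norm_num [h]
    · rcases hAval ω with h | h <;> simp [P, h] <;> grind
  calc ∫ ω, (if A ω = B ω then (V ω - W * A ω) ^ 2 else 0) ∂μ
      = ∫ ω, ((V ω - W * 1) ^ 2 * ({(1, 1)} : Set (ℝ × ℝ)).indicator 1 (P ω) +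
          (V ω - W * (-1)) ^ 2 * ({(-1, -1)} : Set (ℝ × ℝ)).indicator 1 (P ω)) ∂μ :=
        integral_congr_ae (.of_forall hdecomp)
    _ = ((∫ ω, (V ω - W * 1) ^ 2 ∂μ) + ∫ ω, (V ω - W * (-1)) ^ 2 ∂μ) / 4 := by
        rw [integral_add (hdiag_int 1) (hdiag_int (-1)), hdiag 1 (by norm_num),
          hdiag (-1) (by norm_num)]
        ring
    _ = (∫ ω, (2 * V ω ^ 2 + 2 * W ^ 2) ∂μ) / 4 := by
        rw [← integral_add (hsq _) (hsq _)]
        congr 1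
        exact integral_congr_ae (.of_forall fun ω => by ring)
    _ = ((∫ ω, V ω ^ 2 ∂μ) + W ^ 2) / 2 := by
        rw [integral_add (hV.integrable_sq.const_mul 2) (integrable_const _), integral_const_mul,
          integral_const, probReal_univ, one_smul]
        ring

lemma le_integral_inlier_loss [IsProbabilityMeasure μ] {W σ : ℝ} (hσ : 0 ≤ σ)
    {X : ℕ → Ω → ℝ} (hXmeas : ∀ s, Measurable (X s)) {t k : ℕ}
    (hXv : ∀ ω, X t ω = -1 ∨ X t ω = 1) (hiid : iIndepFun X μ)
    (hlaw : ∀ s, μ.map (X s) = rademacherMeasure) (htk : t < k) {v : Ω → ℝ} (hv : Measurable v)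
    (hvdom : ∀ ω, v ω ∈ Set.Icc (-W) W)
    (hvpred : Measurable[MeasurableSpace.comap (fun ω (s : Fin t) => X s ω) inferInstance] v) :
    σ * W ^ 2 / 4 ≤ ∫ ω, σ / 2 * (if X t ω = X k ω then (v ω - W * X t ω) ^ 2 else 0) ∂μ := by
  have hv2 : MemLp v 2 μ :=
    .of_bound hv.aestronglyMeasurable W (.of_forall fun ω => abs_le.mpr (hvdom ω))
  have hindep : IndepFun v (fun ω => (X t ω, X k ω)) μ :=
    (hiid.indepFun_pi_fin_prodMk hXmeas le_rfl htk.le).of_measurable_comap hvpred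
  rw [integral_const_mul, integral_ite_sq_sub_mul_eq_of_rademacher W hv2 (hXmeas t) (hXmeas k) hXv
    (hiid.indepFun htk.ne) hindep (hlaw t) (hlaw k)]
  have := mul_nonneg hσ (integral_nonneg fun ω => sq_nonneg (v ω) : 0 ≤ ∫ ω, v ω ^ 2 ∂μ)
  linarith

lemma le_integral_regret_scInlierSet [IsProbabilityMeasure μ] (W σ : ℝ) (hσ : 0 ≤ σ) (T k : ℕ)
    (X : ℕ → Ω → ℝ) (hXmeas : ∀ t, Measurable (X t)) (hXv : ∀ t ω, X t ω = -1 ∨ X t ω = 1)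
    (hiid : iIndepFun X μ) (hlaw : ∀ t, μ.map (X t) = rademacherMeasure)
    (w : ℕ → Ω → ℝ) (hwdom : ∀ t ω, w t ω ∈ Set.Icc (-W) W) (hwm : ∀ t, Measurable (w t))
    (hwpred : ∀ t < k, Measurable[MeasurableSpace.comap
      (fun ω (s : Fin t) => X s ω) inferInstance] (w t)) :
    σ * W ^ 2 * k / 4 ≤
      ∫ ω, ∑ t ∈ scInlierSet k T X ω,
        (σ / 2 * (w t ω - scCenter k X W t ω) ^ 2
          - σ / 2 * (W * X k ω - scCenter k X W t ω) ^ 2) ∂μ := by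
  have hsq_le : ∀ t s ω, (w t ω - W * X s ω) ^ 2 ≤ (2 * W) ^ 2 := fun t s ω => by
    obtain ⟨h₁, h₂⟩ := abs_le.mp (abs_sub_mul_le_of_mem_Icc (hwdom t ω) (hXv s ω))
    exact sq_le_sq' h₁ h₂
  have hhead_int : ∀ t, Integrable
      (fun ω => σ / 2 * (if X t ω = X k ω then (w t ω - W * X t ω) ^ 2 else 0)) μ := fun t =>
    .of_bound ((Measurable.ite (measurableSet_eq_fun (hXmeas t) (hXmeas k)) (by fun_prop)
        measurable_const).const_mul _).aestronglyMeasurable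
      (σ / 2 * (2 * W) ^ 2) (.of_forall fun ω => by
        rw [Real.norm_eq_abs, abs_of_nonneg (by positivity)]
        gcongr
        split_ifs
        exacts [hsq_le t t ω, by positivity])
  have htail_int : ∀ t, Integrable (fun ω => σ / 2 * (w t ω - W * X k ω) ^ 2) μ := fun t =>
    .of_bound (by fun_prop) (σ / 2 * (2 * W) ^ 2) (.of_forall fun ω => by
      rw [Real.norm_eq_abs, abs_of_nonneg (by positivity)]
      exact mul_le_mul_of_nonneg_left (hsq_le t k ω) (by positivity))
  simp_rw [sum_scInlierSet_regret_eq]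
  rw [integral_add (integrable_finsetSum _ fun t _ => hhead_int t)
    (integrable_finsetSum _ fun t _ => htail_int t),
    integral_finsetSum _ fun t _ => hhead_int t]
  calc σ * W ^ 2 * k / 4 = ∑ _t ∈ Finset.range k, σ * W ^ 2 / 4 := by simp; ring
    _ ≤ _ := Finset.sum_le_sum fun t ht => le_integral_inlier_loss hσ hXmeas (hXv t) hiid hlaw
      (Finset.mem_range.mp ht) (hwm t) (hwdom t) (hwpred t (Finset.mem_range.mp ht))
    _ ≤ _ := le_add_of_nonneg_right (integral_nonneg fun ω =>
      Finset.sum_nonneg fun t _ => by positivity)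

end

theorem lower_bound_strongly_convex_losses_general
    {Ω : Type*} [MeasurableSpace Ω] (μ : Measure Ω) [IsProbabilityMeasure μ]
    (W σ : ℝ) (hσ : 0 < σ)
    (T k : ℕ)
    (X : ℕ → Ω → ℝ) (hXmeas : ∀ t, Measurable (X t))
    (hXval : ∀ t ω, X t ω ∈ ({-1, 1} : Set ℝ))
    (hiid : iIndepFun X μ)
    (hlaw : ∀ t, Measure.map (X t) μ =
      (2 : ENNReal)⁻¹ • Measure.dirac (-1) + (2 : ENNReal)⁻¹ • Measure.dirac 1)
    (w : ℕ → Ω → ℝ) (hwdom : ∀ t ω, w t ω ∈ Set.Icc (-W) W)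
    (hwmeas₁ : ∀ t < k, Measurable[MeasurableSpace.comap
      (fun ω (s : Fin t) => X s ω) inferInstance] (w t))
    (hwmeas₂ : ∀ t, k ≤ t → Measurable[MeasurableSpace.comap
      (fun ω (s : Fin (k + 1)) => X s ω) inferInstance] (w t)) :
    (∀ ω : Ω, T - (scInlierSet k T X ω).card ≤ k) ∧
    σ * W ^ 2 * k / 4 ≤
      ∫ ω, ∑ t ∈ scInlierSet k T X ω,
        (σ / 2 * (w t ω - scCenter k X W t ω) ^ 2
          - σ / 2 * (W * X k ω - scCenter k X W t ω) ^ 2) ∂μ ∧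
    (∀ t < T, ∀ ω : Ω, ∀ v ∈ Set.Icc (-W) W, |σ * (v - scCenter k X W t ω)| ≤ 2 * σ * W) ∧
    σ * W ^ 2 * k / 4 = (2 * σ * W) ^ 2 * k / (16 * σ) := by
  have hXv : ∀ t ω, X t ω = -1 ∨ X t ω = 1 := fun t ω => by simpa using hXval t ω
  have hcomap_le : ∀ n, MeasurableSpace.comap (fun ω (s : Fin n) => X s ω) inferInstance ≤ ‹_› :=
    fun n => (measurable_pi_lambda _ fun s : Fin n => hXmeas s).comap_le
  have hwm : ∀ t, Measurable (w t) := fun t => by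
    rcases lt_or_ge t k with h | h
    · exact (hwmeas₁ t h).mono (hcomap_le t) le_rfl
    · exact (hwmeas₂ t h).mono (hcomap_le (k + 1)) le_rfl
  refine ⟨sub_card_scInlierSet_le k T X,
    le_integral_regret_scInlierSet W σ hσ.le T k X hXmeas hXv hiid hlaw w hwdom hwm hwmeas₁,
    fun t _ ω v hv => ?_, by field_simp; ring⟩
  rw [abs_mul, abs_of_pos hσ, mul_assoc, mul_left_comm]
  exact mul_le_mul_of_nonneg_left (abs_sub_scCenter_le (hXv · ω) hv) hσ.le

/-- Theorem 3, lower bound for strongly convex losses.  The losses are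
the σ-strongly convex squared losses `f_t(v) = (σ/2)(v - W ξ_t)²` for `t ≤ k` and
`f_t(v) = (σ/2)(v - W ζ)²` for `t > k`, on the domain `[-W, W]`, with
`ξ_1,…,ξ_k, ζ` i.i.d. Rademacher (encoded as `X 0,…,X (k-1), X k`).  Against `u = W ζ`
and the inlier set `S`, which always leaves out at most `k` rounds, the expected robust
regret is at least `σ W² k / 4`; moreover every derivative satisfies
`|f_t'(v)| = |σ (v - W ξ)| ≤ 2 σ W` on the domain (so `G(S) ≤ 2σW`), and
`σ W² k / 4 = (2σW)² k / (16σ)`. -/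
theorem lower_bound_strongly_convex_losses
    {Ω : Type*} [MeasurableSpace Ω] (μ : Measure Ω) [IsProbabilityMeasure μ]
    (W σ : ℝ) (hW : 0 < W) (hσ : 0 < σ)
    (T k : ℕ) (hk : 1 ≤ k) (hkT : k ≤ T)
    (X : ℕ → Ω → ℝ) (hXmeas : ∀ t, Measurable (X t))
    (hXval : ∀ t ω, X t ω ∈ ({-1, 1} : Set ℝ))
    (hiid : iIndepFun X μ)
    (hlaw : ∀ t, Measure.map (X t) μ =
      (2 : ENNReal)⁻¹ • Measure.dirac (-1) + (2 : ENNReal)⁻¹ • Measure.dirac 1)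
    (w : ℕ → Ω → ℝ) (hwdom : ∀ t ω, w t ω ∈ Set.Icc (-W) W)
    (hwmeas₁ : ∀ t < k, Measurable[MeasurableSpace.comap
      (fun ω (s : Fin t) => X s ω) inferInstance] (w t))
    (hwmeas₂ : ∀ t, k ≤ t → Measurable[MeasurableSpace.comap
      (fun ω (s : Fin (k + 1)) => X s ω) inferInstance] (w t)) :
    (∀ ω : Ω, T - (scInlierSet k T X ω).card ≤ k) ∧
    σ * W ^ 2 * k / 4 ≤
      ∫ ω, ∑ t ∈ scInlierSet k T X ω,
        (σ / 2 * (w t ω - scCenter k X W t ω) ^ 2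
          - σ / 2 * (W * X k ω - scCenter k X W t ω) ^ 2) ∂μ ∧
    (∀ t < T, ∀ ω : Ω, ∀ v ∈ Set.Icc (-W) W, |σ * (v - scCenter k X W t ω)| ≤ 2 * σ * W) ∧
    σ * W ^ 2 * k / 4 = (2 * σ * W) ^ 2 * k / (16 * σ) :=
  lower_bound_strongly_convex_losses_general μ W σ hσ T k X hXmeas hXval hiid hlaw w hwdom hwmeas₁
    hwmeas₂
end

section
/- Empirical-quantile lower confidence bound: let Y_1,…,Y_t be i.i.d. real random variables, let p ∈ (0,1) with Pr(Y_1 ≤ G_p) = p where G_p is the p-quantile of Y_1, let δ ∈ (0,1), and set u_t = √(2p(1−p)·ln(1/δ)/t) + ln(1/δ)/(3t). Assume p − u_t > 0. Then with probability at least 1 − δ, the empirical quantile satisfies q̂_t(p − u_t) ≤ G_p, where q̂_t(α) = inf{x ∈ ℝ : #{s ≤ t : Y_s ≤ x} ≥ α·t}. -/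
open MeasureTheory ProbabilityTheory

/-- Empirical quantile of the samples `y 0, …, y (t-1)` at level `α`:
`q̂_t(α) = inf {x : #{s ≤ t : y s ≤ x} ≥ α t}`. -/
noncomputable def empQuantile (t : ℕ) (y : ℕ → ℝ) (α : ℝ) : ℝ :=
  sInf {x : ℝ | α * t ≤ (((Finset.range t).filter fun s => y s ≤ x).card : ℝ)}

/-!
The events `{Y s ≤ G_p}` are independent of probability `p`; let `N` be how many of them occur.
If `N > (p - u) t`, then `G_p` lies in the set whose infimum is `q̂_t(p - u)`. The complementary
event `N ≤ t p - u t` is a lower deviation of a binomial count, and Bernstein's inequality bounds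
its probability by `δ`. For `0 ≤ θ < 3` the bound `e^y ≤ 1 + y + y² / (2 (1 - θ/3))`, valid for all
`y ≤ θ`, gives `exp (p (1 - p) θ² / (2 (1 - θ/3)))` as an upper bound for the moment generating
function of `p - 1_{Y ≤ G_p}`. For a suitable `θ` the Chernoff bound at level
`u t = √(2 t p (1 - p) log (1/δ)) + log (1/δ) / 3` is then exactly `exp (-log (1/δ)) = δ`.
-/

open Real Finset Nat

lemma Nat.two_mul_three_pow_le_factorial_add_two (n : ℕ) : 2 * 3 ^ n ≤ (n + 2)! := by
  induction n with
  | zero => simp [Nat.factorial]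
  | succ n ih =>
    rw [Nat.factorial_succ, pow_succ]
    nlinarith

namespace Real

lemma exp_le_one_add_add_sq_div_two_of_nonpos {y : ℝ} (hy : y ≤ 0) :
    exp y ≤ 1 + y + y ^ 2 / 2 := by
  -- multiply by `exp (-y) ≥ 1 - y + y²/2 - y³/6`; the product exceeds `1` by `-y³/6 + y⁴/12 - y⁵/12`
  have hcubic := sum_le_exp_of_nonneg (neg_nonneg.mpr hy) 4
  simp only [sum_range_succ, sum_range_zero, Nat.factorial] at hcubic
  have hprod := exp_add y (-y)
  rw [add_neg_cancel, exp_zero] at hprod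
  nlinarith [exp_pos y, mul_le_mul_of_nonneg_left hcubic (exp_pos y).le, pow_two_nonneg y,
    mul_nonneg (neg_nonneg.mpr hy) (pow_two_nonneg y)]

lemma exp_sub_one_sub_le_of_lt_three {y : ℝ} (hy0 : 0 ≤ y) (hy3 : y < 3) :
    exp y - 1 - y ≤ y ^ 2 / (2 * (1 - y / 3)) := by
  have hexp : HasSum (fun n ↦ y ^ (n + 2) / (n + 2)!) (exp y - 1 - y) := by
    have := (hasSum_nat_add_iff' 2).mpr (exp_eq_exp_ℝ ▸ NormedSpace.expSeries_div_hasSum_exp y)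
    simpa [sum_range_succ, sub_sub] using this
  have hgeom : HasSum (fun n ↦ y ^ 2 / 2 * (y / 3) ^ n) (y ^ 2 / 2 * (1 - y / 3)⁻¹) :=
    (hasSum_geometric_of_lt_one (by positivity) (by linarith)).mul_left _
  calc exp y - 1 - y ≤ y ^ 2 / 2 * (1 - y / 3)⁻¹ := hasSum_le (fun n ↦ ?_) hexp hgeom
    _ = y ^ 2 / (2 * (1 - y / 3)) := by field_simp
  have hfact : (2 * 3 ^ n : ℝ) ≤ (n + 2)! := by
    exact_mod_cast Nat.two_mul_three_pow_le_factorial_add_two n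
  rw [div_pow, pow_add, div_le_iff₀ (by positivity)]
  calc y ^ n * y ^ 2 = y ^ 2 / 2 * (y ^ n / 3 ^ n) * (2 * 3 ^ n) := by field_simp
    _ ≤ _ := by gcongr

lemma exp_le_one_add_add_sq_div_of_le {y c : ℝ} (hyc : y ≤ c) (hc0 : 0 ≤ c) (hc3 : c < 3) :
    exp y ≤ 1 + y + y ^ 2 / (2 * (1 - c / 3)) := by
  rcases le_or_gt y 0 with hy | hy
  · calc exp y ≤ 1 + y + y ^ 2 / 2 := exp_le_one_add_add_sq_div_two_of_nonpos hy
      _ ≤ _ := by gcongr <;> linarith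
  · have := exp_sub_one_sub_le_of_lt_three hy.le (hyc.trans_lt hc3)
    calc exp y ≤ 1 + y + y ^ 2 / (2 * (1 - y / 3)) := by linarith
      _ ≤ _ := by gcongr; linarith

end Real

lemma bernoulli_mgf_le {p θ : ℝ} (hp0 : 0 ≤ p) (hp1 : p ≤ 1) (hθ0 : 0 ≤ θ) (hθ3 : θ < 3) :
    p * exp (θ * (p - 1)) + (1 - p) * exp (θ * p)
      ≤ exp (p * (1 - p) * θ ^ 2 / (2 * (1 - θ / 3))) := by
  have hneg := exp_le_one_add_add_sq_div_of_le (by nlinarith : θ * (p - 1) ≤ θ) hθ0 hθ3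
  have hpos := exp_le_one_add_add_sq_div_of_le (by nlinarith : θ * p ≤ θ) hθ0 hθ3
  calc p * exp (θ * (p - 1)) + (1 - p) * exp (θ * p)
      ≤ p * (1 + θ * (p - 1) + (θ * (p - 1)) ^ 2 / (2 * (1 - θ / 3)))
        + (1 - p) * (1 + θ * p + (θ * p) ^ 2 / (2 * (1 - θ / 3))) := by
        gcongr
    _ = p * (1 - p) * θ ^ 2 / (2 * (1 - θ / 3)) + 1 := by field_simp; ring
    _ ≤ _ := add_one_le_exp _

-- `θ = 3a / (3 + a)` with `a = √(2L/v)`; then `1 - θ/3 = 3 / (3 + a)` and `v a² = 2L`.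
lemma exists_bernstein_exponent {v L : ℝ} (hv : 0 < v) (hL : 0 < L) :
    ∃ θ : ℝ, 0 ≤ θ ∧ θ < 3 ∧
      θ * (√(2 * v * L) + L / 3) - v * θ ^ 2 / (2 * (1 - θ / 3)) = L := by
  set a := √(2 * L / v)
  have ha : 0 < a := sqrt_pos.mpr (by positivity)
  have ha2 : v * a ^ 2 = 2 * L := by
    rw [sq_sqrt (by positivity)]; field_simp
  have hsqrt : √(2 * v * L) = v * a := by
    rw [show 2 * v * L = v ^ 2 * (2 * L / v) by field_simp, sqrt_mul (sq_nonneg v),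
      sqrt_sq hv.le]
  refine ⟨3 * a / (3 + a), by positivity, by rw [div_lt_iff₀ (by positivity)]; linarith, ?_⟩
  rw [hsqrt]
  field_simp
  nlinarith [ha2]

section Bernstein

variable {Ω : Type*} [MeasurableSpace Ω] {μ : Measure Ω}

lemma mgf_const_sub_indicator [IsProbabilityMeasure μ] {A : Set Ω} (hA : MeasurableSet A)
    (c θ : ℝ) :
    mgf (fun ω ↦ c - A.indicator 1 ω) μ θ
      = μ.real A * exp (θ * (c - 1)) + (1 - μ.real A) * exp (θ * c) := by
  have hsplit : (fun ω ↦ exp (θ * (c - A.indicator 1 ω)))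
      = fun ω ↦ exp (θ * c) + (exp (θ * (c - 1)) - exp (θ * c)) * A.indicator 1 ω := by
    ext ω
    by_cases hω : ω ∈ A <;> simp [hω]
  rw [mgf, hsplit, integral_add (integrable_const _)
    ((integrable_indicator_iff hA).mpr (integrable_const _).integrableOn |>.const_mul _),
    integral_const, integral_const_mul, integral_indicator_one hA]
  simp only [probReal_univ, smul_eq_mul, one_mul]
  ring

open scoped Classical in
theorem measureReal_card_le_sub_le_exp_neg {ι : Type*} [Fintype ι] [Nonempty ι]
    {A : ι → Set Ω} (hA : ∀ i, MeasurableSet (A i)) (hind : iIndepSet A μ)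
    {p : ℝ} (hp : p ∈ Set.Ioo 0 1) (hAp : ∀ i, μ.real (A i) = p) {L : ℝ} (hL : 0 < L) :
    μ.real {ω | (#{i | ω ∈ A i} : ℝ)
        ≤ Fintype.card ι * p - (√(2 * (Fintype.card ι * (p * (1 - p))) * L) + L / 3)}
      ≤ exp (-L) := by
  have := hind.isProbabilityMeasure
  obtain ⟨hp0, hp1⟩ := hp
  set v : ℝ := Fintype.card ι * (p * (1 - p))
  set ε := √(2 * v * L) + L / 3
  set Z : ι → Ω → ℝ := fun i ω ↦ p - (A i).indicator 1 ω
  have hZmeas : ∀ i, Measurable (Z i) :=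
    fun i ↦ measurable_const.sub (measurable_const.indicator (hA i))
  have hZind : iIndepFun Z μ :=
    hind.iIndepFun_indicator.comp (fun _ x ↦ p - x) fun _ ↦ measurable_const.sub measurable_id
  have hsum : ∀ ω, (∑ i, Z i) ω = Fintype.card ι * p - #{i | ω ∈ A i} := fun ω ↦ by
    simp [Z, Finset.sum_sub_distrib, Set.indicator_apply, Finset.sum_boole]
  obtain ⟨θ, hθ0, hθ3, hθL⟩ := exists_bernstein_exponent (by positivity : 0 < v) hL
  have hint : Integrable (fun ω ↦ exp (θ * (∑ i, Z i) ω)) μ :=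
    hZind.integrable_exp_mul_sum hZmeas fun i _ ↦ integrable_exp_mul_of_le θ p hθ0
      (hZmeas i).aemeasurable
      (ae_of_all _ fun ω ↦ sub_le_self p (Set.indicator_nonneg (fun _ _ ↦ zero_le_one) ω))
  have hchernoff := measure_ge_le_exp_mul_mgf ε hθ0 hint
  rw [hZind.mgf_sum hZmeas] at hchernoff
  calc μ.real {ω | (#{i | ω ∈ A i} : ℝ) ≤ Fintype.card ι * p - ε}
      = μ.real {ω | ε ≤ (∑ i, Z i) ω} := by simp_rw [hsum, le_sub_comm]
    _ ≤ exp (-θ * ε) * ∏ i, (p * exp (θ * (p - 1)) + (1 - p) * exp (θ * p)) := by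
      simpa [Z, mgf_const_sub_indicator (hA _), hAp] using hchernoff
    _ ≤ exp (-θ * ε) * exp (p * (1 - p) * θ ^ 2 / (2 * (1 - θ / 3))) ^ Fintype.card ι := by
      rw [Finset.prod_const, Finset.card_univ]
      gcongr
      exact bernoulli_mgf_le hp0.le hp1.le hθ0 hθ3
    _ = exp (-L) := by
      rw [← exp_nat_mul, ← exp_add, ← hθL]
      congr 1
      ring

lemma ofReal_one_sub_le_measure_compl [IsProbabilityMeasure μ] {s : Set Ω} {δ : ℝ}
    (hs : μ.real s ≤ δ) : ENNReal.ofReal (1 - δ) ≤ μ sᶜ := by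
  have hδ0 : 0 ≤ δ := measureReal_nonneg.trans hs
  have hδ : μ s ≤ ENNReal.ofReal δ := by
    rwa [ENNReal.le_ofReal_iff_toReal_le (measure_ne_top μ s) hδ0]
  calc ENNReal.ofReal (1 - δ) ≤ 1 - ENNReal.ofReal δ := by
        rw [← ENNReal.ofReal_one, ← ENNReal.ofReal_sub _ hδ0]
    _ ≤ 1 - μ s := tsub_le_tsub_left hδ 1
    _ ≤ μ sᶜ := tsub_le_iff_left.mpr (measure_univ (μ := μ) ▸ measure_univ_le_add_compl s)

end Bernstein

lemma empQuantile_le {t : ℕ} (ht : 0 < t) (y : ℕ → ℝ) {α x : ℝ} (hα : 0 < α)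
    (hx : α * t ≤ #{s ∈ Finset.range t | y s ≤ x}) : empQuantile t y α ≤ x := by
  obtain ⟨b, hb⟩ := ((Finset.range t).image y).bddBelow
  refine csInf_le ⟨b, fun z hz ↦ ?_⟩ hx
  have hcard : 0 < #{s ∈ Finset.range t | y s ≤ z} := by
    exact_mod_cast (by positivity : (0 : ℝ) < α * t).trans_le hz
  obtain ⟨s, hs⟩ := Finset.card_pos.mp hcard
  rw [Finset.mem_filter] at hs
  exact (hb (Finset.mem_coe.mpr (Finset.mem_image_of_mem y hs.1))).trans hs.2

theorem empirical_quantile_lower_confidence_general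
    {Ω : Type*} [MeasurableSpace Ω] (μ : Measure Ω) [IsProbabilityMeasure μ]
    (t : ℕ) (ht : 1 ≤ t)
    (Y : ℕ → Ω → ℝ) (hmeas : ∀ s < t, Measurable (Y s))
    (hiid : iIndepFun (fun s : Fin t => Y s) μ)
    (hident : ∀ s < t, Measure.map (Y s) μ = Measure.map (Y 0) μ)
    (p : ℝ) (hp : p ∈ Set.Ioo (0 : ℝ) 1)
    (Gp : ℝ)
    (hnoatom : (μ {ω | Y 0 ω ≤ Gp}).toReal = p)
    (δ : ℝ) (hδ : δ ∈ Set.Ioo (0 : ℝ) 1)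
    (u : ℝ)
    (hu : u = Real.sqrt (2 * p * (1 - p) * Real.log (1 / δ) / t)
      + Real.log (1 / δ) / (3 * t))
    (hpos : 0 < p - u) :
    ENNReal.ofReal (1 - δ) ≤ μ {ω | empQuantile t (fun s => Y s ω) (p - u) ≤ Gp} := by
  classical
  have : Nonempty (Fin t) := ⟨⟨0, ht⟩⟩
  have ht0 : (0 : ℝ) < t := by exact_mod_cast ht
  set A : Fin t → Set Ω := fun s ↦ Y s ⁻¹' Set.Iic Gp
  have hA : ∀ s, MeasurableSet (A s) := fun s ↦ hmeas s s.isLt measurableSet_Iic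
  have hAp : ∀ s, μ.real (A s) = p := fun s ↦ by
    rw [measureReal_def, ← Measure.map_apply (hmeas s s.isLt) measurableSet_Iic, hident s s.isLt,
      Measure.map_apply (hmeas 0 ht) measurableSet_Iic, ← hnoatom]
    rfl
  have hind : iIndepSet A μ := (iIndepSet_iff_meas_biInter hA).mpr fun S ↦
    iIndepFun_iff_measure_inter_preimage_eq_mul.mp hiid S fun _ _ ↦ measurableSet_Iic
  have hL : 0 < log (1 / δ) := log_pos (by rw [one_div]; exact one_lt_inv_iff₀.mpr hδ)
  have hut : u * t = √(2 * (t * (p * (1 - p))) * log (1 / δ)) + log (1 / δ) / 3 := by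
    have hvar : 0 ≤ 2 * p * (1 - p) * log (1 / δ) / t := by
      have := hp.1; have := hp.2; positivity
    rw [hu, add_mul, show 2 * (t * (p * (1 - p))) * log (1 / δ)
      = 2 * p * (1 - p) * log (1 / δ) / t * t ^ 2 by field_simp, sqrt_mul hvar, sqrt_sq ht0.le]
    field_simp
  have hcount : ∀ ω, #{s | ω ∈ A s} = #{s ∈ Finset.range t | Y s ω ≤ Gp} := fun ω ↦ by
    simp only [card_filter, A, Set.mem_preimage, Set.mem_Iic]
    exact Fin.sum_univ_eq_sum_range (fun s ↦ if Y s ω ≤ Gp then 1 else 0) t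
  have hbad := measureReal_card_le_sub_le_exp_neg hA hind hp hAp hL
  rw [Fintype.card_fin, ← hut, one_div, log_inv, neg_neg, exp_log hδ.1] at hbad
  refine (ofReal_one_sub_le_measure_compl hbad).trans (measure_mono fun ω hω ↦ ?_)
  simp only [Set.mem_compl_iff, Set.mem_ofPred_eq, not_le, hcount] at hω
  exact empQuantile_le ht _ hpos (by linarith)

/-- lower confidence bound for the empirical quantile.  If `Y 0,…,Y (t-1)`
are i.i.d. with `Pr(Y ≤ G_p) = p` where `G_p` is the `p`-quantile, and
`u_t = √(2p(1-p)ln(1/δ)/t) + ln(1/δ)/(3t)` with `p - u_t > 0`, then with probability at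
least `1-δ` we have `q̂_t(p - u_t) ≤ G_p`. -/
theorem empirical_quantile_lower_confidence
    {Ω : Type*} [MeasurableSpace Ω] (μ : Measure Ω) [IsProbabilityMeasure μ]
    (t : ℕ) (ht : 1 ≤ t)
    (Y : ℕ → Ω → ℝ) (hmeas : ∀ s < t, Measurable (Y s))
    (hiid : iIndepFun (fun s : Fin t => Y s) μ)
    (hident : ∀ s < t, Measure.map (Y s) μ = Measure.map (Y 0) μ)
    (p : ℝ) (hp : p ∈ Set.Ioo (0 : ℝ) 1)
    (Gp : ℝ) (hGp : Gp = sInf {x : ℝ | p ≤ (μ {ω | Y 0 ω ≤ x}).toReal})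
    (hnoatom : (μ {ω | Y 0 ω ≤ Gp}).toReal = p)
    (δ : ℝ) (hδ : δ ∈ Set.Ioo (0 : ℝ) 1)
    (u : ℝ)
    (hu : u = Real.sqrt (2 * p * (1 - p) * Real.log (1 / δ) / t)
      + Real.log (1 / δ) / (3 * t))
    (hpos : 0 < p - u) :
    ENNReal.ofReal (1 - δ) ≤ μ {ω | empQuantile t (fun s => Y s ω) (p - u) ≤ Gp} :=
  empirical_quantile_lower_confidence_general μ t ht Y hmeas hiid hident p hp Gp hnoatom δ hδ u hu
    hpos
end
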